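/- arXiv:0802.1100 — 7 statements merged into one kernel-verified Lean document; each statement's English description precedes it below -/
import Mathlib

section
/- Let V be a doubly stochastic quadratic operator on the simplex S^{m-1} with coefficients p_{ij,k}. Then for every k = 1,...,m one has ∑_{i,j=1}^m p_{ij,k} = m. -/
/-- Sum of the `k` largest entries of `x`, as a supremum over `k`-element subsets. -/
noncomputable def maxSum (m : ℕ) (x : Fin m → ℝ) (k : ℕ) : ℝ :=
  sSup {r : ℝ | ∃ s : Finset (Fin m), s.card = k ∧ r = ∑ i ∈ s, x i}

/-- `x ≺ y` : `x` is majorized by `y`. -/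
def IsMajorizedBy (m : ℕ) (x y : Fin m → ℝ) : Prop :=
  ∀ k : ℕ, 1 ≤ k → k ≤ m - 1 → maxSum m x k ≤ maxSum m y k

/-- Conditions on the coefficients of a quadratic stochastic operator. -/
def QSOCoeffs (m : ℕ) (p : Fin m → Fin m → Fin m → ℝ) : Prop :=
  (∀ i j k, p i j k = p j i k) ∧ (∀ i j k, 0 ≤ p i j k) ∧ (∀ i j, ∑ k, p i j k = 1)

/-- The quadratic map determined by the coefficients. -/
def QSOMap (m : ℕ) (p : Fin m → Fin m → Fin m → ℝ) (x : Fin m → ℝ) : Fin m → ℝ :=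
  fun k => ∑ i, ∑ j, p i j k * x i * x j

/-- A doubly stochastic quadratic operator: `V x ≺ x` for all `x` in the simplex. -/
def IsDSQO (m : ℕ) (p : Fin m → Fin m → Fin m → ℝ) : Prop :=
  QSOCoeffs m p ∧ ∀ x ∈ stdSimplex ℝ (Fin m), IsMajorizedBy m (QSOMap m p x) x

open Finset

lemma le_maxSum_one (m : ℕ) (y : Fin m → ℝ) (k : Fin m) : y k ≤ maxSum m y 1 := by
  refine le_csSup ⟨∑ i, |y i|, ?_⟩ ⟨{k}, by simp⟩
  rintro r ⟨s, hs, rfl⟩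
  obtain ⟨i, rfl⟩ := card_eq_one.mp hs
  rw [sum_singleton]
  exact (le_abs_self _).trans (single_le_sum (fun j _ => abs_nonneg (y j)) (mem_univ i))

lemma maxSum_const_one (m : ℕ) (hm : 0 < m) (a : ℝ) : maxSum m (fun _ => a) 1 = a := by
  have hset : {r : ℝ | ∃ s : Finset (Fin m), s.card = 1 ∧ r = ∑ _i ∈ s, a} = {a} := by
    ext r
    constructor
    · rintro ⟨s, hs, rfl⟩
      obtain ⟨i, rfl⟩ := card_eq_one.mp hs
      simp
    · rintro rfl
      exact ⟨{⟨0, hm⟩}, by simp⟩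
  rw [maxSum, hset, csSup_singleton]

lemma const_inv_mem_stdSimplex (m : ℕ) (hm : 0 < m) :
    (fun _ => (m : ℝ)⁻¹) ∈ stdSimplex ℝ (Fin m) := by
  refine ⟨fun _ => by positivity, ?_⟩
  simp only [sum_const, card_univ, Fintype.card_fin, nsmul_eq_mul]
  exact mul_inv_cancel₀ (by positivity)

section QSOMap

variable {m : ℕ} {p : Fin m → Fin m → Fin m → ℝ}

lemma sum_QSOMap (hp : ∀ i j, ∑ k, p i j k = 1) (x : Fin m → ℝ) :
    ∑ k, QSOMap m p x k = (∑ i, x i) ^ 2 := by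
  calc ∑ k, QSOMap m p x k = ∑ i, ∑ j, (∑ k, p i j k) * (x i * x j) := by
        simp only [QSOMap, sum_mul]
        rw [sum_comm]
        refine sum_congr rfl fun i _ => ?_
        rw [sum_comm]
        exact sum_congr rfl fun j _ => sum_congr rfl fun k _ => by ring
    _ = (∑ i, x i) ^ 2 := by simp only [hp, one_mul, sq, sum_mul_sum]

lemma QSOMap_const (a : ℝ) (k : Fin m) :
    QSOMap m p (fun _ => a) k = (∑ i, ∑ j, p i j k) * a ^ 2 := by
  simp only [QSOMap, sum_mul]
  exact sum_congr rfl fun i _ => sum_congr rfl fun j _ => by ring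

/-- For `m ≥ 2` this is majorization at `k = 1`; for `m = 1` the majorization condition is
vacuous and the bound comes from `V` preserving the simplex. -/
lemma IsDSQO.QSOMap_const_inv_le (h : IsDSQO m p) (l : Fin m) :
    QSOMap m p (fun _ => (m : ℝ)⁻¹) l ≤ (m : ℝ)⁻¹ := by
  have hm : 0 < m := l.pos
  obtain ⟨⟨-, -, hp⟩, hmaj⟩ := h
  rcases Nat.lt_or_ge m 2 with hm1 | hm2
  · obtain rfl : m = 1 := by omega
    have hsum := sum_QSOMap hp (fun _ => ((1 : ℕ) : ℝ)⁻¹)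
    simp only [Fin.sum_univ_one, Nat.cast_one, inv_one, one_pow] at hsum
    simp [Subsingleton.elim l 0, hsum]
  · calc QSOMap m p (fun _ => (m : ℝ)⁻¹) l
        ≤ maxSum m (QSOMap m p (fun _ => (m : ℝ)⁻¹)) 1 := le_maxSum_one m _ l
      _ ≤ maxSum m (fun _ => (m : ℝ)⁻¹) 1 :=
          hmaj _ (const_inv_mem_stdSimplex m hm) 1 le_rfl (by omega)
      _ = (m : ℝ)⁻¹ := maxSum_const_one m hm _

/-- The barycenter of the simplex is a fixed point: `V` can only lower its coordinates, while
preserving their total. -/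
lemma IsDSQO.QSOMap_const_inv (h : IsDSQO m p) (l : Fin m) :
    QSOMap m p (fun _ => (m : ℝ)⁻¹) l = (m : ℝ)⁻¹ := by
  have hm : 0 < m := l.pos
  have hsum : ∑ k, QSOMap m p (fun _ => (m : ℝ)⁻¹) k = ∑ _k : Fin m, (m : ℝ)⁻¹ := by
    rw [sum_QSOMap h.1.2.2, (const_inv_mem_stdSimplex m hm).2, one_pow]
  exact (sum_eq_sum_iff_of_le fun k _ => h.QSOMap_const_inv_le k).1 hsum l (mem_univ l)

end QSOMap

/-- For a doubly stochastic quadratic operator, the total sum of the coefficients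
of each component equals `m`. -/
theorem dsqo_sum_eq (m : ℕ) (p : Fin m → Fin m → Fin m → ℝ) (h : IsDSQO m p) :
    ∀ k : Fin m, ∑ i, ∑ j, p i j k = (m : ℝ) := by
  intro k
  have hm : (m : ℝ) ≠ 0 := by exact_mod_cast k.pos.ne'
  have hfix := h.QSOMap_const_inv k
  rw [QSOMap_const] at hfix
  field_simp at hfix
  exact hfix
end

section
/- Let V be a doubly stochastic quadratic operator on the simplex S^{m-1} with coefficients p_{ij,k}. Then for every i and every k one has ∑_{j=1}^m p_{ij,k} ≥ 1/2. -/
lemma maxSumSet_eq (m : ℕ) (x : Fin m → ℝ) (k : ℕ) :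
    {r : ℝ | ∃ s : Finset (Fin m), s.card = k ∧ r = ∑ i ∈ s, x i} =
      ↑((Finset.powersetCard k (Finset.univ : Finset (Fin m))).image
        (fun s => ∑ i ∈ s, x i)) := by
  ext r
  simp [Finset.mem_powersetCard_univ, eq_comm]

lemma maxSum_bddAbove (m : ℕ) (x : Fin m → ℝ) (k : ℕ) :
    BddAbove {r : ℝ | ∃ s : Finset (Fin m), s.card = k ∧ r = ∑ i ∈ s, x i} := by
  rw [maxSumSet_eq]
  exact Finset.bddAbove _

lemma qso_sum_eq_one (m : ℕ) (p : Fin m → Fin m → Fin m → ℝ)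
    (hsum : ∀ i j, ∑ k, p i j k = 1) (x : Fin m → ℝ) (hx : ∑ j, x j = 1) :
    ∑ l, QSOMap m p x l = 1 := by
  have h1 : ∑ l, QSOMap m p x l = ∑ i, ∑ j, ∑ l, p i j l * x i * x j := by
    unfold QSOMap
    rw [Finset.sum_comm]
    exact Finset.sum_congr rfl fun i _ => Finset.sum_comm
  rw [h1]
  have h2 : ∀ i j : Fin m, ∑ l, p i j l * x i * x j = x i * x j := by
    intro i j
    simp only [mul_assoc, ← Finset.sum_mul, hsum, one_mul]
  simp only [h2, ← Finset.mul_sum, hx, mul_one]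

/-- The minimum entry cannot decrease under a d.s.q.o. -/
lemma key_min (m : ℕ) (hm : 2 ≤ m) (p : Fin m → Fin m → Fin m → ℝ)
    (h : IsDSQO m p) (x : Fin m → ℝ) (hx : x ∈ stdSimplex ℝ (Fin m))
    (b : ℝ) (hb : ∀ j, b ≤ x j) (k : Fin m) : b ≤ QSOMap m p x k := by
  obtain ⟨⟨hsymm, hpos, hsum⟩, hds⟩ := h
  have hxsum : ∑ j, x j = 1 := hx.2
  have hVsum : ∑ l, QSOMap m p x l = 1 := qso_sum_eq_one m p hsum x hxsum
  have hmaj := hds x hx (m - 1) (by omega) le_rfl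
  have hcard : ((Finset.univ : Finset (Fin m)).erase k).card = m - 1 := by
    rw [Finset.card_erase_of_mem (Finset.mem_univ k), Finset.card_univ, Fintype.card_fin]
  have hA : ∑ l ∈ Finset.univ.erase k, QSOMap m p x l ≤ maxSum m (QSOMap m p x) (m - 1) :=
    le_csSup (maxSum_bddAbove _ _ _) ⟨Finset.univ.erase k, hcard, rfl⟩
  have hB : maxSum m x (m - 1) ≤ 1 - b := by
    have hne : {r : ℝ | ∃ s : Finset (Fin m), s.card = m - 1 ∧ r = ∑ i ∈ s, x i}.Nonempty :=
      ⟨_, ⟨Finset.univ.erase k, hcard, rfl⟩⟩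
    apply csSup_le hne
    rintro r ⟨s, hs, rfl⟩
    have hcompl : sᶜ.card = 1 := by
      rw [Finset.card_compl, hs, Fintype.card_fin]; omega
    have hlow : b ≤ ∑ j ∈ sᶜ, x j := by
      have := Finset.card_nsmul_le_sum sᶜ x b (fun j _ => hb j)
      rwa [hcompl, one_nsmul] at this
    have := Finset.sum_add_sum_compl s x
    rw [hxsum] at this
    linarith
  have hsplit : QSOMap m p x k + ∑ l ∈ Finset.univ.erase k, QSOMap m p x l = 1 := by
    rw [Finset.add_sum_erase _ _ (Finset.mem_univ k), hVsum]
  linarith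

/-- total mass of each coefficient matrix is at most `m`. -/
lemma coeff_total_le (m : ℕ) (hm : 2 ≤ m) (p : Fin m → Fin m → Fin m → ℝ)
    (h : IsDSQO m p) (k : Fin m) : ∑ a, ∑ c, p a c k ≤ m := by
  obtain ⟨⟨hsymm, hpos, hsum⟩, hds⟩ := h
  have hm0 : (0:ℝ) < m := by positivity
  set u : Fin m → ℝ := fun _ => (1:ℝ)/m with hu
  have husimp : u ∈ stdSimplex ℝ (Fin m) := by
    constructor
    · intro j; positivity
    · simp [u, Finset.sum_const, Fintype.card_fin]
      field_simp
  have hlow : ∀ l : Fin m, (m:ℝ) ≤ ∑ a, ∑ c, p a c l := by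
    intro l
    have hk := key_min m hm p ⟨⟨hsymm, hpos, hsum⟩, hds⟩ u husimp ((1:ℝ)/m)
      (fun j => le_refl _) l
    have hq : QSOMap m p u l = (∑ a, ∑ c, p a c l) * ((1/m) * (1/m)) := by
      unfold QSOMap
      rw [Finset.sum_mul]
      exact Finset.sum_congr rfl fun a _ => by
        rw [Finset.sum_mul]
        exact Finset.sum_congr rfl fun c _ => by simp [u]; ring
    rw [hq] at hk
    have h1 : (1:ℝ)/m * (m*m) ≤ (∑ a, ∑ c, p a c l) * (1/m * (1/m)) * (m*m) :=
      mul_le_mul_of_nonneg_right hk (by positivity)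
    have e1 : (1:ℝ)/m * (m*m) = m := by field_simp
    have e2 : (∑ a, ∑ c, p a c l) * ((1:ℝ)/m * (1/m)) * (m*m)
        = ∑ a, ∑ c, p a c l := by field_simp
    rw [e1, e2] at h1
    exact h1
  have htot : ∑ l, ∑ a, ∑ c, p a c l = (m:ℝ) * m := by
    rw [Finset.sum_comm]
    calc ∑ a : Fin m, ∑ l : Fin m, ∑ c, p a c l
        = ∑ a : Fin m, ∑ c : Fin m, ∑ l, p a c l :=
          Finset.sum_congr rfl fun a _ => Finset.sum_comm
      _ = ∑ a : Fin m, ∑ c : Fin m, (1:ℝ) :=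
          Finset.sum_congr rfl fun a _ => Finset.sum_congr rfl fun c _ => hsum a c
      _ = (m:ℝ) * m := by simp [Finset.sum_const, Fintype.card_fin]
  have herase : ((m:ℝ) - 1) * m ≤ ∑ l ∈ Finset.univ.erase k, ∑ a, ∑ c, p a c l := by
    have hcard : ((Finset.univ : Finset (Fin m)).erase k).card = m - 1 := by
      rw [Finset.card_erase_of_mem (Finset.mem_univ k), Finset.card_univ, Fintype.card_fin]
    have := Finset.card_nsmul_le_sum (Finset.univ.erase k)
      (fun l => ∑ a, ∑ c, p a c l) (m:ℝ) (fun l _ => hlow l)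
    rw [hcard, nsmul_eq_mul, Nat.cast_sub (by omega), Nat.cast_one] at this
    exact this
  have hsplit : ∑ a, ∑ c, p a c k + ∑ l ∈ Finset.univ.erase k, ∑ a, ∑ c, p a c l
      = (m:ℝ) * m := by
    rw [Finset.add_sum_erase Finset.univ (fun l => ∑ a, ∑ c, p a c l) (Finset.mem_univ k)]
    exact htot
  nlinarith [herase, hsplit]

lemma qso_expand (m : ℕ) (p : Fin m → Fin m → Fin m → ℝ) (k i : Fin m) (b δ : ℝ) :
    QSOMap m p (fun j => b + if j = i then δ else 0) k
      = (∑ a, ∑ c, p a c k) * (b*b) + (∑ a, p a i k) * (δ*b) + (∑ c, p i c k) * (δ*b)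
        + p i i k * (δ*δ) := by
  unfold QSOMap
  have step : ∀ a c : Fin m,
      p a c k * (b + if a = i then δ else 0) * (b + if c = i then δ else 0)
        = p a c k * (b*b) + (p a c k * (if c = i then δ else 0)) * b
          + (p a c k * (if a = i then δ else 0)) * b
          + (p a c k * (if a = i then δ else 0)) * (if c = i then δ else 0) := by
    intro a c; ring
  calc ∑ a, ∑ c, p a c k * (b + if a = i then δ else 0) * (b + if c = i then δ else 0)
      = ∑ a, ∑ c, (p a c k * (b*b) + (p a c k * (if c = i then δ else 0)) * b
          + (p a c k * (if a = i then δ else 0)) * b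
          + (p a c k * (if a = i then δ else 0)) * (if c = i then δ else 0)) := by
        exact Finset.sum_congr rfl fun a _ => Finset.sum_congr rfl fun c _ => step a c
    _ = (∑ a, ∑ c, p a c k * (b*b)) + (∑ a, ∑ c, (p a c k * (if c = i then δ else 0)) * b)
        + (∑ a, ∑ c, (p a c k * (if a = i then δ else 0)) * b)
        + (∑ a, ∑ c, (p a c k * (if a = i then δ else 0)) * (if c = i then δ else 0)) := by
        simp only [Finset.sum_add_distrib]
    _ = (∑ a, ∑ c, p a c k) * (b*b) + (∑ a, p a i k) * (δ*b) + (∑ c, p i c k) * (δ*b)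
        + p i i k * (δ*δ) := by
        congr 1
        congr 1
        congr 1
        · rw [Finset.sum_mul]
          exact Finset.sum_congr rfl fun a _ => (Finset.sum_mul _ _ _).symm
        · have e2 : ∀ a : Fin m, ∑ c, (p a c k * (if c = i then δ else 0)) * b
              = p a i k * (δ*b) := by
            intro a
            simp [mul_ite, ite_mul, Finset.sum_ite_eq', mul_assoc]
          simp only [e2]
          exact (Finset.sum_mul _ _ _).symm
        · rw [Finset.sum_comm]
          have e3 : ∀ c : Fin m, ∑ a, (p a c k * (if a = i then δ else 0)) * b
              = p i c k * (δ*b) := by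
            intro c
            simp [mul_ite, ite_mul, Finset.sum_ite_eq', mul_assoc]
          simp only [e3]
          exact (Finset.sum_mul _ _ _).symm
        · have e4 : ∀ a : Fin m, ∑ c, (p a c k * (if a = i then δ else 0))
              * (if c = i then δ else 0) = (p a i k * (if a = i then δ else 0)) * δ := by
            intro a
            simp [mul_ite, ite_mul, Finset.sum_ite_eq']
          simp only [e4]
          simp [ite_mul, mul_ite, Finset.sum_ite_eq', mul_assoc]

set_option maxHeartbeats 2000000 in
/-- For a doubly stochastic quadratic operator, each row sum of each coefficient
matrix is at least `1/2`. -/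
theorem dsqo_row_sum_ge_half (m : ℕ) (p : Fin m → Fin m → Fin m → ℝ) (h : IsDSQO m p) :
    ∀ i k : Fin m, (1 / 2 : ℝ) ≤ ∑ j, p i j k := by
  intro i k
  obtain ⟨⟨hsymm, hpos, hsum⟩, hds⟩ := h
  rcases Nat.lt_or_ge m 2 with hm | hm
  · -- m = 0 or 1 : trivial
    interval_cases m
    · exact i.elim0
    · have h1 := hsum i i
      have : ∑ j, p i j k = 1 := by
        rw [Fin.sum_univ_one] at h1 ⊢
        have : k = 0 := Subsingleton.elim _ _
        rw [this]
        have hi0 : i = 0 := Subsingleton.elim _ _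
        rw [hi0] at h1 ⊢
        exact h1
      linarith
  -- main case m ≥ 2
  by_contra hcon
  push_neg at hcon
  have hm0 : (0:ℝ) < m := by positivity
  obtain ⟨R, hR⟩ : ∃ R : ℝ, R = ∑ j, p i j k := ⟨_, rfl⟩
  obtain ⟨pii, hpiidef⟩ : ∃ pii : ℝ, pii = p i i k := ⟨_, rfl⟩
  rw [← hR] at hcon
  have hpii : 0 ≤ pii := hpiidef ▸ hpos i i k
  have hu : (0:ℝ) < 1 - 2*R := by linarith
  obtain ⟨D, hD⟩ : ∃ D : ℝ, D = m * pii + (1 - 2*R) := ⟨_, rfl⟩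
  have hDpos : 0 < D := by
    have : (0:ℝ) ≤ m * pii := by positivity
    rw [hD]; linarith
  obtain ⟨δ, hδ⟩ : ∃ δ : ℝ, δ = (1 - 2*R) / (2*D) := ⟨_, rfl⟩
  have hδpos : 0 < δ := by rw [hδ]; exact div_pos hu (by linarith)
  have hδle : δ ≤ 1/2 := by
    rw [hδ, div_le_iff₀ (by linarith : (0:ℝ) < 2*D)]
    have : (0:ℝ) ≤ m * pii := by positivity
    rw [hD]; nlinarith
  obtain ⟨b, hb⟩ : ∃ b : ℝ, b = (1 - δ) / m := ⟨_, rfl⟩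
  have hmb : (m:ℝ) * b = 1 - δ := by
    rw [hb]; field_simp
  have hb0 : 0 < b := by
    rw [hb]; apply div_pos (by linarith) hm0
  obtain ⟨x, hx⟩ : ∃ x : Fin m → ℝ, x = fun j => b + if j = i then δ else 0 := ⟨_, rfl⟩
  have hxs : x ∈ stdSimplex ℝ (Fin m) := by
    constructor
    · intro j
      rw [hx]
      dsimp only
      split <;> linarith
    · rw [hx]
      rw [Finset.sum_add_distrib, Finset.sum_const, Finset.sum_ite_eq', Finset.card_univ,
        Fintype.card_fin, nsmul_eq_mul]
      simp [hmb]
  have hbx : ∀ j, b ≤ x j := by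
    intro j
    rw [hx]
    dsimp only
    split <;> linarith
  have hk := key_min m hm p ⟨⟨hsymm, hpos, hsum⟩, hds⟩ x hxs b hbx k
  have hexp := qso_expand m p k i b δ
  rw [← hx] at hexp
  have hcol : ∑ a, p a i k = R := by
    rw [hR]
    exact Finset.sum_congr rfl fun a _ => hsymm a i k
  have hSle : ∑ a, ∑ c, p a c k ≤ (m:ℝ) :=
    coeff_total_le m hm p ⟨⟨hsymm, hpos, hsum⟩, hds⟩ k
  rw [hexp, hcol, ← hR, ← hpiidef] at hk
  -- hk : b ≤ S*(b*b) + R*(δ*b) + R*(δ*b) + pii*(δ*δ)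
  have hk2 : b ≤ (m:ℝ)*(b*b) + R*(δ*b) + R*(δ*b) + pii*(δ*δ) := by
    nlinarith [hk, hSle, mul_pos hb0 hb0]
  -- m*b = 1-δ  ⇒  b ≤ (1-δ)*b + 2Rδb + pii δ²  ⇒  δ(b(1-2R) - δ pii) ≤ 0
  have hmbb : (m:ℝ)*(b*b) = (1-δ)*b := by
    rw [← hmb]; ring
  rw [hmbb] at hk2
  have h5 : 0 ≤ δ * (2*b*R - b + δ*pii) := by nlinarith [hk2]
  have h6 : 0 ≤ 2*b*R - b + δ*pii := by nlinarith [h5, hδpos]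
  have h6' : b*(1-2*R) ≤ δ*pii := by nlinarith [h6]
  have h2mb : (1:ℝ) ≤ 2*(m:ℝ)*b := by
    have : 2*(m:ℝ)*b = 2*(1-δ) := by rw [mul_assoc, hmb]
    rw [this]; linarith
  have h8 : (1-2*R) ≤ 2*(m:ℝ)*b*(1-2*R) := by nlinarith [hu, h2mb]
  have h9 : 2*(m:ℝ)*b*(1-2*R) ≤ 2*(m:ℝ)*(δ*pii) := by nlinarith [h6', hm0]
  have h7 : (1-2*R) ≤ 2*(m:ℝ)*(δ*pii) := le_trans h8 h9
  have hδeq : δ * (2*D) = 1 - 2*R := by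
    rw [hδ]; field_simp
  rw [hD] at hδeq
  nlinarith [h7, hδeq, mul_pos hδpos hu]
end

section
/- Let V be a doubly stochastic quadratic operator on the simplex S^{m-1} with coefficients p_{ij,k}. Then for every subset α ⊆ {1,...,m} and every k = 1,...,m one has ∑_{i∈α} ∑_{j∈α} p_{ij,k} ≤ |α|, where |α| denotes the cardinality of α. -/
/-- For a doubly stochastic quadratic operator, the sum of the coefficients over any
principal block `α × α` is at most `|α|`. -/
theorem dsqo_block_sum_le (m : ℕ) (p : Fin m → Fin m → Fin m → ℝ) (h : IsDSQO m p) :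
    ∀ α : Finset (Fin m), ∀ k : Fin m,
      ∑ i ∈ α, ∑ j ∈ α, p i j k ≤ (α.card : ℝ) := by
  obtain ⟨⟨psymm, pnn, psum⟩, hmaj⟩ := h
  have ple1 : ∀ i j k, p i j k ≤ 1 := fun i j k => by
    rw [← psum i j]
    exact Finset.single_le_sum (fun k' _ => pnn i j k') (Finset.mem_univ k)
  intro α k
  rcases Nat.lt_or_ge α.card 2 with hc | hc
  · interval_cases h' : α.card
    · simp [Finset.card_eq_zero.mp h']
    · obtain ⟨a, rfl⟩ := Finset.card_eq_one.mp h'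
      simpa using ple1 a a k
  · have hm2 : 2 ≤ m := le_trans hc (by simpa using α.card_le_univ)
    have hcard0 : (0:ℝ) < (α.card : ℝ) := by
      exact_mod_cast Nat.lt_of_lt_of_le Nat.zero_lt_two hc
    set c : ℝ := (α.card : ℝ)⁻¹ with hcdef
    have hcpos : 0 < c := inv_pos.mpr hcard0
    have hcc : (α.card : ℝ) * c = 1 := mul_inv_cancel₀ (ne_of_gt hcard0)
    set x : Fin m → ℝ := fun i => if i ∈ α then c else 0 with hxdef
    have hxnn : ∀ i, 0 ≤ x i := fun i => by
      by_cases hi : i ∈ α <;> simp [hxdef, hi, le_of_lt hcpos]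
    have hx : x ∈ stdSimplex ℝ (Fin m) := by
      refine ⟨hxnn, ?_⟩
      rw [Finset.sum_ite_mem, Finset.univ_inter, Finset.sum_const, nsmul_eq_mul, hcc]
    have hV : QSOMap m p x k = (∑ i ∈ α, ∑ j ∈ α, p i j k) * c * c := by
      unfold QSOMap
      rw [Finset.sum_mul, Finset.sum_mul]
      rw [← Finset.sum_subset α.subset_univ (fun i _ hi => by
        simp [hxdef, hi, Finset.sum_eq_zero_iff])]
      refine Finset.sum_congr rfl fun i hi => ?_
      rw [Finset.sum_mul, Finset.sum_mul]
      rw [← Finset.sum_subset α.subset_univ (fun j _ hj => by simp [hxdef, hj])]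
      exact Finset.sum_congr rfl fun j hj => by simp [hxdef, hi, hj]
    have hVnn : ∀ i, 0 ≤ QSOMap m p x i := fun i =>
      Finset.sum_nonneg fun a _ => Finset.sum_nonneg fun b _ => by
        have := pnn a b i
        have := hxnn a
        have := hxnn b
        positivity
    have h1 : QSOMap m p x k ≤ maxSum m (QSOMap m p x) 1 := by
      apply le_csSup
      · refine ⟨∑ i, QSOMap m p x i, ?_⟩
        rintro r ⟨s, hs, rfl⟩
        exact Finset.sum_le_sum_of_subset_of_nonneg s.subset_univ
          (fun i _ _ => hVnn i)
      · exact ⟨{k}, Finset.card_singleton k, by simp⟩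
    have h2 : maxSum m (QSOMap m p x) 1 ≤ maxSum m x 1 :=
      hmaj x hx 1 le_rfl (by omega)
    have h3 : maxSum m x 1 ≤ c := by
      apply Real.sSup_le
      · rintro r ⟨s, hs, rfl⟩
        obtain ⟨a, rfl⟩ := Finset.card_eq_one.mp hs
        simp only [Finset.sum_singleton]
        by_cases ha : a ∈ α <;> simp [hxdef, ha, le_of_lt hcpos]
      · exact le_of_lt hcpos
    have key : (∑ i ∈ α, ∑ j ∈ α, p i j k) * c * c ≤ c := by
      rw [← hV]; exact le_trans h1 (le_trans h2 h3)
    have key2 : (∑ i ∈ α, ∑ j ∈ α, p i j k) * c * c * ((α.card:ℝ) * (α.card:ℝ))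
        ≤ c * ((α.card:ℝ) * (α.card:ℝ)) :=
      mul_le_mul_of_nonneg_right key (mul_pos hcard0 hcard0).le
    calc (∑ i ∈ α, ∑ j ∈ α, p i j k)
        = (∑ i ∈ α, ∑ j ∈ α, p i j k) * ((α.card:ℝ) * c) * ((α.card:ℝ) * c) := by
          rw [hcc]; ring
      _ = (∑ i ∈ α, ∑ j ∈ α, p i j k) * c * c * ((α.card:ℝ) * (α.card:ℝ)) := by ring
      _ ≤ c * ((α.card:ℝ) * (α.card:ℝ)) := key2
      _ = ((α.card:ℝ) * c) * (α.card:ℝ) := by ring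
      _ = (α.card:ℝ) := by rw [hcc]; ring
end

section
/- If A = (a_ij) is an extreme point of U_1, then every diagonal entry satisfies a_ii ∈ {0, 1} and every entry satisfies a_ij ∈ {0, 1/2, 1}. -/
/-- Extreme point of a set: cannot be a midpoint of two distinct points of the set. -/
def IsExtremePt {X : Type*} [AddCommGroup X] [Module ℝ X] (C : Set X) (x : X) : Prop :=
  x ∈ C ∧ ∀ y ∈ C, ∀ z ∈ C, x = (1 / 2 : ℝ) • (y + z) → y = z

/-- The set `U_1` of symmetric nonnegative matrices with all principal-block sums
bounded by the block size and total sum `m`. -/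
def U1 (m : ℕ) : Set (Matrix (Fin m) (Fin m) ℝ) :=
  {A | A.IsSymm ∧ (∀ i j, 0 ≤ A i j) ∧
    (∀ α : Finset (Fin m), ∑ i ∈ α, ∑ j ∈ α, A i j ≤ (α.card : ℝ)) ∧
    (∑ i, ∑ j, A i j = (m : ℝ))}

/-!
Call `s` tight for `A` if `∑_{i,j ∈ s} a_ij = |s|`. The block sum is supermodular, its defect
being the mass joining `α \ β` to `β \ α`; so tight sets are closed under intersection and no
positive entry joins `α \ β` to `β \ α` for tight `α`, `β`. Hence every `i` has a least tight set
`T_i`. If two different positive entries `a_kl`, `a_k'l'` had `T_k = T_k'` containing `l` and `l'`,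
shifting mass from one to the other would keep every tight constraint tight and, for small shifts,
every slack one slack, contradicting extremality. A positive `a_ij` has `j ∈ T_i` or `i ∈ T_j`,
say the former; then `a_ij` is the only positive entry of row `i` inside `T_i`, and comparing the
tight constraint on `T_i` with the constraints on `T_i \ {i}`, on `T_i \ {i, j}` (if `T_i = T_j`)
or on `T_j ∪ {i}` (otherwise) gives `a_ij ∈ {1/2, 1}`, and `a_ii = 1` in the same way.
-/

open Finset Filter Topology

theorem IsExtremePt.eq_zero_of_eventually_add_smul_mem {X : Type*} [AddCommGroup X]
    [Module ℝ X] {C : Set X} {x v : X} (hx : IsExtremePt C x)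
    (h : ∀ᶠ t in 𝓝 (0 : ℝ), x + t • v ∈ C) : v = 0 := by
  have hneg : ∀ᶠ t in 𝓝 (0 : ℝ), x + (-t) • v ∈ C :=
    (continuous_neg.tendsto' 0 0 neg_zero).eventually h
  obtain ⟨t, ht0, hpos, hneg⟩ := (eventually_mem_nhdsWithin.and
    ((h.and hneg).filter_mono nhdsWithin_le_nhds) : ∀ᶠ t in 𝓝[≠] (0 : ℝ), _).exists
  have heq := hx.2 _ hpos _ hneg (by module)
  by_contra hv
  have htt : t = -t := smul_left_injective ℝ hv (add_left_cancel heq)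
  exact ht0 (Set.mem_singleton_iff.2 (by linarith))

section BlockSum

variable {n R : Type*}

def blockSum [AddCommMonoid R] (A : Matrix n n R) (s : Finset n) : R := ∑ i ∈ s, ∑ j ∈ s, A i j

variable [DecidableEq n]

theorem blockSum_union_add_blockSum_inter [AddCommMonoid R] (A : Matrix n n R)
    (α β : Finset n) :
    blockSum A (α ∪ β) + blockSum A (α ∩ β) =
      blockSum A α + blockSum A β + ∑ i ∈ α \ β, ∑ j ∈ β \ α, A i j +
        ∑ i ∈ β \ α, ∑ j ∈ α \ β, A i j := by
  simp only [blockSum, ← sum_product' (f := A)]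
  have hsplit : (α ∪ β) ×ˢ (α ∪ β) =
      (α ×ˢ α ∪ β ×ˢ β) ∪ ((α \ β) ×ˢ (β \ α) ∪ (β \ α) ×ˢ (α \ β)) := by
    ext ⟨i, j⟩; simp only [mem_union, mem_product, Finset.mem_sdiff]; tauto
  have hdisj : Disjoint (α ×ˢ α ∪ β ×ˢ β) ((α \ β) ×ˢ (β \ α) ∪ (β \ α) ×ˢ (α \ β)) := by
    simp only [disjoint_left, mem_union, mem_product, Finset.mem_sdiff]; tauto
  have hdisj' : Disjoint ((α \ β) ×ˢ (β \ α)) ((β \ α) ×ˢ (α \ β)) := by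
    simp only [disjoint_left, mem_product, Finset.mem_sdiff]; tauto
  rw [hsplit, sum_union hdisj, sum_union hdisj', ← product_inter_product, add_right_comm,
    sum_union_inter]
  abel

theorem blockSum_insert [NonAssocSemiring R] {A : Matrix n n R} (hA : A.IsSymm)
    {s : Finset n} {i : n} (hi : i ∉ s) :
    blockSum A (insert i s) = blockSum A s + A i i + 2 * ∑ j ∈ s, A i j := by
  simp only [blockSum, sum_insert hi, sum_add_distrib, two_mul, hA.apply i]
  abel

end BlockSum

section EdgeMatrix

variable {n R : Type*} [DecidableEq n] [AddCommMonoidWithOne R]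

/-- The loop `edgeMatrix k k` is `2 • single k k 1`, so every edge, loops included, adds `2` to
the block sum of each set containing its ends. -/
def edgeMatrix (k l : n) : Matrix n n R := Matrix.single k l 1 + Matrix.single l k 1

theorem edgeMatrix_isSymm (k l : n) : (edgeMatrix k l : Matrix n n R).IsSymm := by
  simp only [Matrix.IsSymm, edgeMatrix, Matrix.transpose_add, Matrix.transpose_single, add_comm]

theorem edgeMatrix_apply_of_ne {k l i j : n} (h : s(i, j) ≠ s(k, l)) :
    (edgeMatrix k l : Matrix n n R) i j = 0 := by
  simp only [ne_eq, Sym2.eq_iff, not_or, not_and_or] at h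
  simp only [edgeMatrix, Matrix.add_apply, Matrix.single_apply]
  rw [if_neg (by tauto), if_neg (by tauto), add_zero]

theorem edgeMatrix_apply_self_ne_zero [CharZero R] (k l : n) :
    (edgeMatrix k l : Matrix n n R) k l ≠ 0 := by
  simp only [edgeMatrix, Matrix.add_apply, Matrix.single_apply, and_self, if_true]
  split_ifs <;> norm_num

theorem blockSum_edgeMatrix (k l : n) (s : Finset n) :
    blockSum (edgeMatrix k l : Matrix n n R) s = if k ∈ s ∧ l ∈ s then 2 else 0 := by
  simp only [blockSum, edgeMatrix, Matrix.add_apply, Matrix.single_apply, sum_add_distrib,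
    ite_and]
  by_cases hk : k ∈ s <;> by_cases hl : l ∈ s <;> simp [hk, hl, one_add_one_eq_two]

end EdgeMatrix

theorem eventually_nonneg_add_mul {a b : ℝ} (ha : 0 ≤ a) (hb : a = 0 → b = 0) :
    ∀ᶠ t in 𝓝 (0 : ℝ), 0 ≤ a + t * b := by
  rcases ha.eq_or_lt with h0 | hpos
  · simp [← h0, hb h0.symm]
  · exact ((continuous_const.add (continuous_id.mul continuous_const)).tendsto' 0 a
      (by simp)).eventually (eventually_ge_nhds hpos)

def IsTight {n : Type*} (A : Matrix n n ℝ) (s : Finset n) : Prop := blockSum A s = s.card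

def tightSetsContaining {n : Type*} (A : Matrix n n ℝ) (i : n) : Set (Finset n) :=
  {s | IsTight A s ∧ i ∈ s}

section U1

variable {m : ℕ} {A : Matrix (Fin m) (Fin m) ℝ}

theorem blockSum_le_card (hA : A ∈ U1 m) (s : Finset (Fin m)) : blockSum A s ≤ s.card :=
  hA.2.2.1 s

theorem isTight_univ (hA : A ∈ U1 m) : IsTight A univ := by
  simp [IsTight, blockSum, hA.2.2.2]

theorem IsTight.inter_and_sum_sdiff_sdiff_eq_zero (hA : A ∈ U1 m) {α β : Finset (Fin m)}
    (hα : IsTight A α) (hβ : IsTight A β) :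
    IsTight A (α ∩ β) ∧ ∑ i ∈ α \ β, ∑ j ∈ β \ α, A i j = 0 := by
  have hid := blockSum_union_add_blockSum_inter A α β
  have hcard : ((α ∪ β).card : ℝ) + (α ∩ β).card = α.card + β.card := by
    exact_mod_cast card_union_add_card_inter α β
  have hnonneg : ∀ s t : Finset (Fin m), 0 ≤ ∑ i ∈ s, ∑ j ∈ t, A i j :=
    fun s t => sum_nonneg fun i _ => sum_nonneg fun j _ => hA.2.1 i j
  have := blockSum_le_card hA (α ∪ β)
  have := blockSum_le_card hA (α ∩ β)
  have := hnonneg (α \ β) (β \ α)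
  have := hnonneg (β \ α) (α \ β)
  unfold IsTight at *
  constructor <;> linarith

theorem IsTight.inter (hA : A ∈ U1 m) {α β : Finset (Fin m)} (hα : IsTight A α)
    (hβ : IsTight A β) : IsTight A (α ∩ β) :=
  (hα.inter_and_sum_sdiff_sdiff_eq_zero hA hβ).1

theorem IsTight.apply_eq_zero_of_mem_sdiff (hA : A ∈ U1 m) {α β : Finset (Fin m)}
    (hα : IsTight A α) (hβ : IsTight A β) {i j : Fin m} (hi : i ∈ α \ β) (hj : j ∈ β \ α) :
    A i j = 0 := by
  have hzero := (hα.inter_and_sum_sdiff_sdiff_eq_zero hA hβ).2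
  rw [sum_eq_zero_iff_of_nonneg fun i _ => sum_nonneg fun j _ => hA.2.1 i j] at hzero
  exact (sum_eq_zero_iff_of_nonneg fun j _ => hA.2.1 i j).1 (hzero i hi) j hj

theorem exists_isLeast_tightSetsContaining (hA : A ∈ U1 m) (i : Fin m) :
    ∃ t, IsLeast (tightSetsContaining A i) t := by
  classical
  let S := univ.filter (· ∈ tightSetsContaining A i)
  refine ⟨S.inf id, ?_, fun s hs => inf_le (by simpa [S] using hs)⟩
  refine inf_induction (p := (· ∈ tightSetsContaining A i)) ⟨isTight_univ hA, mem_univ i⟩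
    (fun a ha b hb => ⟨ha.1.inter hA hb.1, mem_inter.2 ⟨ha.2, hb.2⟩⟩) ?_
  simp [S]

theorem one_le_diag_add_two_mul_sum (hA : A ∈ U1 m) {t : Finset (Fin m)} (ht : IsTight A t)
    {k : Fin m} (hk : k ∈ t) : 1 ≤ A k k + 2 * ∑ x ∈ t.erase k, A k x := by
  have hsplit := blockSum_insert hA.1 (notMem_erase k t)
  rw [insert_erase hk, ht] at hsplit
  have := blockSum_le_card hA (t.erase k)
  rw [cast_card_erase_of_mem hk] at this
  linarith

theorem diag_add_two_mul_sum_le_one (hA : A ∈ U1 m) {u : Finset (Fin m)} (hu : IsTight A u)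
    {k : Fin m} (hk : k ∉ u) : A k k + 2 * ∑ x ∈ u, A k x ≤ 1 := by
  have hsplit := blockSum_insert hA.1 hk
  rw [hu] at hsplit
  have := blockSum_le_card hA (insert k u)
  rw [card_insert_of_notMem hk, Nat.cast_succ] at this
  linarith

theorem apply_le_one (hA : A ∈ U1 m) (i j : Fin m) : A i j ≤ 1 := by
  rcases eq_or_ne i j with rfl | hij
  · simpa [blockSum] using blockSum_le_card hA {i}
  · have hsplit := blockSum_insert hA.1 (notMem_singleton.2 hij)
    have := blockSum_le_card hA {i, j}
    rw [card_pair hij] at this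
    simp only [blockSum, sum_singleton, Nat.cast_ofNat] at hsplit this
    linarith [hA.2.1 i i, hA.2.1 j j]

theorem eventually_add_smul_mem_U1 (hA : A ∈ U1 m) {D : Matrix (Fin m) (Fin m) ℝ}
    (hD : D.IsSymm) (hsupp : ∀ i j, A i j = 0 → D i j = 0)
    (htight : ∀ s, IsTight A s → blockSum D s = 0) :
    ∀ᶠ t in 𝓝 (0 : ℝ), A + t • D ∈ U1 m := by
  have hblock : ∀ t s, blockSum (A + t • D) s = blockSum A s + t * blockSum D s := by
    intro t s
    simp only [blockSum, Matrix.add_apply, Matrix.smul_apply, smul_eq_mul, sum_add_distrib,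
      mul_sum]
  have hentries : ∀ᶠ t in 𝓝 (0 : ℝ), ∀ i j, 0 ≤ A i j + t * D i j :=
    eventually_all.2 fun i => eventually_all.2 fun j =>
      eventually_nonneg_add_mul (hA.2.1 i j) (hsupp i j)
  have hblocks : ∀ᶠ t in 𝓝 (0 : ℝ), ∀ s, 0 ≤ (s.card - blockSum A s) + t * -blockSum D s :=
    eventually_all.2 fun s => eventually_nonneg_add_mul (sub_nonneg.2 (blockSum_le_card hA s))
      fun h => by rw [htight s (sub_eq_zero.1 h).symm, neg_zero]
  filter_upwards [hentries, hblocks] with t hent hblk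
  refine ⟨?_, fun i j => hent i j, fun s => ?_, ?_⟩
  · simp only [Matrix.IsSymm, Matrix.transpose_add, Matrix.transpose_smul, hA.1.eq, hD.eq]
  · show blockSum (A + t • D) s ≤ s.card
    linarith [hblock t s, hblk s]
  · show blockSum (A + t • D) univ = m
    rw [hblock, htight _ (isTight_univ hA), isTight_univ hA]
    simp

theorem sym2_eq_of_isLeast (hext : IsExtremePt (U1 m) A) {t : Finset (Fin m)}
    {k₁ l₁ k₂ l₂ : Fin m} (h₁ : IsLeast (tightSetsContaining A k₁) t)
    (h₂ : IsLeast (tightSetsContaining A k₂) t) (hl₁ : l₁ ∈ t) (hl₂ : l₂ ∈ t)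
    (hp₁ : 0 < A k₁ l₁) (hp₂ : 0 < A k₂ l₂) : s(k₁, l₁) = s(k₂, l₂) := by
  by_contra hne
  have hA := hext.1
  -- A tight set containing `k₁` or `k₂` contains `t`, hence all four ends, so shifting mass
  -- between the two edges changes no tight block sum.
  set D : Matrix (Fin m) (Fin m) ℝ := edgeMatrix k₁ l₁ - edgeMatrix k₂ l₂
  have hsupp : ∀ i j, A i j = 0 → D i j = 0 := by
    intro i j h0
    have hoff : ∀ {k l}, 0 < A k l → s(i, j) ≠ s(k, l) := by
      intro k l hp h
      rcases Sym2.eq_iff.1 h with ⟨rfl, rfl⟩ | ⟨rfl, rfl⟩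
      · exact hp.ne' h0
      · exact hp.ne' (hA.1.apply i j ▸ h0)
    simp [D, edgeMatrix_apply_of_ne (hoff hp₁), edgeMatrix_apply_of_ne (hoff hp₂)]
  have htight : ∀ s, IsTight A s → blockSum D s = 0 := by
    intro s hs
    have hiff : ∀ {k l}, IsLeast (tightSetsContaining A k) t → l ∈ t → (k ∈ s ∧ l ∈ s ↔ t ⊆ s) :=
      fun hk hl => ⟨fun hkl => hk.2 ⟨hs, hkl.1⟩, fun hts => ⟨hts hk.1.2, hts hl⟩⟩
    simp only [D, blockSum, Matrix.sub_apply, sum_sub_distrib]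
    rw [← blockSum, ← blockSum, blockSum_edgeMatrix, blockSum_edgeMatrix]
    simp only [hiff h₁ hl₁, hiff h₂ hl₂, sub_self]
  have hD0 := hext.eq_zero_of_eventually_add_smul_mem
    (eventually_add_smul_mem_U1 hA ((edgeMatrix_isSymm k₁ l₁).sub (edgeMatrix_isSymm k₂ l₂))
      hsupp htight)
  have := congr_fun (congr_fun hD0 k₁) l₁
  rw [Matrix.sub_apply, edgeMatrix_apply_of_ne hne, sub_zero] at this
  exact edgeMatrix_apply_self_ne_zero k₁ l₁ this

theorem apply_eq_zero_of_isLeast (hext : IsExtremePt (U1 m) A) {t : Finset (Fin m)}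
    {k l x : Fin m} (ht : IsLeast (tightSetsContaining A k) t) (hl : l ∈ t) (hpos : 0 < A k l)
    (hx : x ∈ t) (hxl : x ≠ l) : A k x = 0 := by
  refine ((hext.1.2.1 k x).eq_or_lt.resolve_right fun hx' => hxl ?_).symm
  exact (Sym2.congr_right.1 (sym2_eq_of_isLeast hext ht ht hl hx hpos hx')).symm

theorem diag_eq_one_of_pos (hext : IsExtremePt (U1 m) A) {k : Fin m} (hpos : 0 < A k k) :
    A k k = 1 := by
  obtain ⟨t, ht⟩ := exists_isLeast_tightSetsContaining hext.1 k
  have hrow : ∑ x ∈ t.erase k, A k x = 0 := sum_eq_zero fun x hx =>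
    apply_eq_zero_of_isLeast hext ht ht.1.2 hpos (mem_of_mem_erase hx) (ne_of_mem_erase hx)
  have := one_le_diag_add_two_mul_sum hext.1 ht.1.1 ht.1.2
  rw [hrow, mul_zero, add_zero] at this
  exact le_antisymm (apply_le_one hext.1 k k) this

theorem half_le_apply_of_isLeast (hext : IsExtremePt (U1 m) A) {t : Finset (Fin m)}
    {i j : Fin m} (hij : i ≠ j) (ht : IsLeast (tightSetsContaining A i) t) (hj : j ∈ t)
    (hpos : 0 < A i j) : 1 / 2 ≤ A i j := by
  have hrow : ∀ x ∈ t, x ≠ j → A i x = 0 := fun x hx hxj =>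
    apply_eq_zero_of_isLeast hext ht hj hpos hx hxj
  have hsum : ∑ x ∈ t.erase i, A i x = A i j :=
    sum_eq_single_of_mem j (mem_erase.2 ⟨hij.symm, hj⟩) fun x hx hxj =>
      hrow x (mem_of_mem_erase hx) hxj
  have := one_le_diag_add_two_mul_sum hext.1 ht.1.1 ht.1.2
  rw [hsum, hrow i ht.1.2 hij] at this
  linarith

theorem apply_le_half (hA : A ∈ U1 m) {u : Finset (Fin m)} (hu : IsTight A u) {i j : Fin m}
    (hj : j ∈ u) (hi : i ∉ u) : A i j ≤ 1 / 2 := by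
  have := diag_add_two_mul_sum_le_one hA hu hi
  have := single_le_sum (fun x _ => hA.2.1 i x) hj
  linarith [hA.2.1 i i]

theorem apply_eq_one_of_isLeast (hext : IsExtremePt (U1 m) A) {t : Finset (Fin m)}
    {i j : Fin m} (hij : i ≠ j) (hi : IsLeast (tightSetsContaining A i) t)
    (hj : IsLeast (tightSetsContaining A j) t) (hpos : 0 < A i j) : A i j = 1 := by
  have hA := hext.1
  have hi0 : ∀ x ∈ t, x ≠ j → A i x = 0 := fun x hx hxj =>
    apply_eq_zero_of_isLeast hext hi hj.1.2 hpos hx hxj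
  have hj0 : ∀ x ∈ t, x ≠ i → A j x = 0 := fun x hx hxi =>
    apply_eq_zero_of_isLeast hext hj hi.1.2 (hA.1.apply j i ▸ hpos) hx hxi
  set r := (t.erase i).erase j
  have hjr : j ∉ r := notMem_erase j _
  have hir : i ∉ insert j r := by simp [r, hij]
  have hr : ∀ x ∈ r, x ∈ t ∧ x ≠ i ∧ x ≠ j := fun x hx => by
    simp only [r, mem_erase] at hx; exact ⟨hx.2.2, hx.2.1, hx.1⟩
  have ht : insert i (insert j r) = t := by
    rw [insert_erase (mem_erase.2 ⟨hij.symm, hj.1.2⟩), insert_erase hi.1.2]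
  have hsplit : (t.card : ℝ) = blockSum A r + 2 * A i j := by
    rw [← hi.1.1, ← ht, blockSum_insert hA.1 hir, blockSum_insert hA.1 hjr,
      sum_insert hjr, sum_eq_zero fun x hx => hi0 x (hr x hx).1 (hr x hx).2.2,
      sum_eq_zero fun x hx => hj0 x (hr x hx).1 (hr x hx).2.1, hi0 i hi.1.2 hij,
      hj0 j hj.1.2 hij.symm]
    ring
  have hcard : (r.card : ℝ) + 2 = t.card := by
    rw [← ht, card_insert_of_notMem hir, card_insert_of_notMem hjr]
    push_cast; ring
  have := blockSum_le_card hA r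
  exact le_antisymm (apply_le_one hA i j) (by linarith)

theorem apply_eq_half_or_one_of_mem (hext : IsExtremePt (U1 m) A) {t : Finset (Fin m)}
    {i j : Fin m} (hij : i ≠ j) (ht : IsLeast (tightSetsContaining A i) t) (hj : j ∈ t)
    (hpos : 0 < A i j) : A i j = 1 / 2 ∨ A i j = 1 := by
  obtain ⟨u, hu⟩ := exists_isLeast_tightSetsContaining hext.1 j
  by_cases hiu : i ∈ u
  · have hut : u = t := le_antisymm (hu.2 ⟨ht.1.1, hj⟩) (ht.2 ⟨hu.1.1, hiu⟩)
    exact Or.inr (apply_eq_one_of_isLeast hext hij ht (hut ▸ hu) hpos)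
  · exact Or.inl (le_antisymm (apply_le_half hext.1 hu.1.1 hu.1.2 hiu)
      (half_le_apply_of_isLeast hext hij ht hj hpos))

theorem apply_eq_half_or_one (hext : IsExtremePt (U1 m) A) {i j : Fin m} (hij : i ≠ j)
    (hpos : 0 < A i j) : A i j = 1 / 2 ∨ A i j = 1 := by
  have hA := hext.1
  obtain ⟨t, ht⟩ := exists_isLeast_tightSetsContaining hA i
  obtain ⟨u, hu⟩ := exists_isLeast_tightSetsContaining hA j
  by_cases hjt : j ∈ t
  · exact apply_eq_half_or_one_of_mem hext hij ht hjt hpos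
  by_cases hiu : i ∈ u
  · rw [← hA.1.apply]
    exact apply_eq_half_or_one_of_mem hext hij.symm hu hiu (hA.1.apply i j ▸ hpos)
  · exact absurd (ht.1.1.apply_eq_zero_of_mem_sdiff hA hu.1.1 (mem_sdiff.2 ⟨ht.1.2, hiu⟩)
      (mem_sdiff.2 ⟨hu.1.2, hjt⟩)) hpos.ne'

end U1

/-- Every extreme point of `U_1` has diagonal entries in {0,1} and all entries in
{0, 1/2, 1}. -/
theorem extreme_U1_entries (m : ℕ) (A : Matrix (Fin m) (Fin m) ℝ)
    (h : IsExtremePt (U1 m) A) :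
    (∀ i, A i i = 0 ∨ A i i = 1) ∧
      (∀ i j, A i j = 0 ∨ A i j = 1 / 2 ∨ A i j = 1) := by
  have hdiag : ∀ i, A i i = 0 ∨ A i i = 1 := fun i =>
    (h.1.2.1 i i).eq_or_lt.imp Eq.symm (diag_eq_one_of_pos h)
  refine ⟨hdiag, fun i j => ?_⟩
  rcases (h.1.2.1 i j).eq_or_lt with h0 | hpos
  · exact Or.inl h0.symm
  rcases eq_or_ne i j with rfl | hij
  · exact Or.inr (Or.inr ((hdiag i).resolve_left hpos.ne'))
  · exact Or.inr (apply_eq_half_or_one h hij hpos)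
end

section
/- If A = (a_ij) is an extreme point of U_1, then either A is a stochastic matrix, or there exists a subset α ⊆ {1,...,m} with |α| = m−1 such that ∑_{i∈α} ∑_{j∈α} a_ij = m−1. -/
/-- A (row-)stochastic matrix. -/
def IsStochastic (m : ℕ) (T : Matrix (Fin m) (Fin m) ℝ) : Prop :=
  (∀ i j, 0 ≤ T i j) ∧ ∀ i, ∑ j, T i j = 1

/-!
An extreme point `A` of `U1` admits no nonzero symmetric perturbation supported on its positive
entries that keeps every tight block (a block `τ` with block sum `τ.card`) tight. Tight blocks are
closed under union and intersection, by supermodularity of the block sum of a nonnegative matrix.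
Strong induction on a tight block `α` then shows that `A` is row-stochastic on `α` unless `α` has a
tight subblock of size `α.card - 1`. If two proper tight blocks cover `α`, replacing either by its
tight subblock of one size less keeps them a cover, until both are row-stochastic; then so is `α`,
by counting its total mass. Otherwise all proper tight blocks lie in
a largest one, `β`, and rigidity puts all the mass `α.card - β.card ≥ 2` outside `β × β` on a single
symmetric pair of entries; this forces `α` to be a two-element block carrying the exchange matrix.
-/

open Finset

namespace Matrix

variable {ι : Type*}

def blockSum (A : Matrix ι ι ℝ) (s : Finset ι) : ℝ := ∑ i ∈ s, ∑ j ∈ s, A i j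

def IsTight (A : Matrix ι ι ℝ) (s : Finset ι) : Prop := A.blockSum s = s.card

def RowStochasticOn (A : Matrix ι ι ℝ) (s : Finset ι) : Prop := ∀ i ∈ s, ∑ j ∈ s, A i j = 1

def IsRigidOn (A : Matrix ι ι ℝ) (α : Finset ι) : Prop :=
  ∀ C : Matrix ι ι ℝ, C.IsSymm → (∀ i j, C i j ≠ 0 → i ∈ α ∧ j ∈ α ∧ 0 < A i j) →
    (∀ τ ⊆ α, A.IsTight τ → C.blockSum τ = 0) → C = 0

theorem blockSum_eq_sum_product (A : Matrix ι ι ℝ) (s : Finset ι) :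
    A.blockSum s = ∑ p ∈ s ×ˢ s, A p.1 p.2 :=
  (sum_product s s fun p => A p.1 p.2).symm

@[simp] theorem blockSum_add (A B : Matrix ι ι ℝ) (s : Finset ι) :
    (A + B).blockSum s = A.blockSum s + B.blockSum s := by
  simp only [blockSum, add_apply, sum_add_distrib]

@[simp] theorem blockSum_sub (A B : Matrix ι ι ℝ) (s : Finset ι) :
    (A - B).blockSum s = A.blockSum s - B.blockSum s := by
  simp only [blockSum, sub_apply, sum_sub_distrib]

@[simp] theorem blockSum_smul (c : ℝ) (A : Matrix ι ι ℝ) (s : Finset ι) :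
    (c • A).blockSum s = c * A.blockSum s := by
  simp only [blockSum, smul_apply, smul_eq_mul, mul_sum]

variable [DecidableEq ι] {A C : Matrix ι ι ℝ} {α β γ δ σ τ s t : Finset ι}

theorem blockSum_add_blockSum_le_union_add_inter (hA : ∀ i j, 0 ≤ A i j) (s t : Finset ι) :
    A.blockSum s + A.blockSum t ≤ A.blockSum (s ∪ t) + A.blockSum (s ∩ t) := by
  have hinter : (s ×ˢ s) ∩ (t ×ˢ t) = (s ∩ t) ×ˢ (s ∩ t) := product_inter_product
  have hunion : (s ×ˢ s) ∪ (t ×ˢ t) ⊆ (s ∪ t) ×ˢ (s ∪ t) :=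
    union_subset (product_subset_product subset_union_left subset_union_left)
      (product_subset_product subset_union_right subset_union_right)
  simp only [blockSum_eq_sum_product, ← hinter, ← sum_union_inter (s₁ := s ×ˢ s)]
  exact add_le_add_left (sum_le_sum_of_subset_of_nonneg hunion fun p _ _ => hA p.1 p.2) _

theorem IsTight.union_inter (hs : A.IsTight s) (ht : A.IsTight t) (hA : ∀ i j, 0 ≤ A i j)
    (hbd : ∀ τ ⊆ α, A.blockSum τ ≤ τ.card) (hsα : s ⊆ α) (htα : t ⊆ α) :
    A.IsTight (s ∪ t) ∧ A.IsTight (s ∩ t) := by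
  have hunion := hbd _ (union_subset hsα htα)
  have hinter := hbd (s ∩ t) (inter_subset_left.trans hsα)
  have hsuper := blockSum_add_blockSum_le_union_add_inter hA s t
  have hcard : ((s ∪ t).card : ℝ) + (s ∩ t).card = s.card + t.card := by
    exact_mod_cast card_union_add_card_inter s t
  unfold IsTight at *
  constructor <;> linarith

theorem blockSum_inter_of_support (hC : ∀ i j, C i j ≠ 0 → i ∈ γ ∧ j ∈ γ) (τ : Finset ι) :
    C.blockSum (τ ∩ γ) = C.blockSum τ := by
  rw [blockSum_eq_sum_product, blockSum_eq_sum_product]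
  refine sum_subset (product_subset_product inter_subset_left inter_subset_left) fun p hp hp' => ?_
  by_contra hne
  obtain ⟨h1, h2⟩ := hC p.1 p.2 hne
  simp only [mem_product, mem_inter] at hp hp'
  exact hp' ⟨⟨hp.1, h1⟩, hp.2, h2⟩

theorem IsRigidOn.of_isTight (hα : A.IsRigidOn α) (hA : ∀ i j, 0 ≤ A i j)
    (hbd : ∀ τ ⊆ α, A.blockSum τ ≤ τ.card) (hγα : γ ⊆ α) (hγ : A.IsTight γ) :
    A.IsRigidOn γ := by
  intro C hCs hC hCt
  refine hα C hCs (fun i j hij => ?_) fun τ hτα hτ => ?_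
  · obtain ⟨hi, hj, hpos⟩ := hC i j hij
    exact ⟨hγα hi, hγα hj, hpos⟩
  · rw [← blockSum_inter_of_support (fun i j hij => ⟨(hC i j hij).1, (hC i j hij).2.1⟩) τ]
    exact hCt _ inter_subset_right (hτ.union_inter hγ hA hbd hτα hγα).2

theorem IsRigidOn.blockSum_smul_eq {E F : Matrix ι ι ℝ} (hα : A.IsRigidOn α)
    (hEs : E.IsSymm) (hFs : F.IsSymm)
    (hE : ∀ i j, E i j ≠ 0 → i ∈ α ∧ j ∈ α ∧ 0 < A i j)
    (hF : ∀ i j, F i j ≠ 0 → i ∈ α ∧ j ∈ α ∧ 0 < A i j)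
    (hEt : ∀ τ ⊆ α, τ ≠ α → A.IsTight τ → E.blockSum τ = 0)
    (hFt : ∀ τ ⊆ α, τ ≠ α → A.IsTight τ → F.blockSum τ = 0) :
    F.blockSum α • E = E.blockSum α • F := by
  refine sub_eq_zero.mp (hα _ ?_ (fun i j hij => ?_) fun τ hτα hτ => ?_)
  · simp only [IsSymm, transpose_sub, transpose_smul, hEs.eq, hFs.eq]
  · by_cases hEij : E i j = 0
    · refine hF i j fun hFij => hij ?_
      simp [hEij, hFij]
    · exact hE i j hEij
  · by_cases hτα' : τ = α
    · subst hτα'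
      simp only [blockSum_sub, blockSum_smul]
      ring
    · simp [hEt τ hτα hτα' hτ, hFt τ hτα hτα' hτ]

def sym2Indicator (z : Sym2 ι) : Matrix ι ι ℝ := Matrix.of fun a b => if s(a, b) = z then 1 else 0

theorem sym2Indicator_apply (z : Sym2 ι) (a b : ι) :
    sym2Indicator z a b = if s(a, b) = z then 1 else 0 := rfl

theorem sym2Indicator_isSymm (z : Sym2 ι) : (sym2Indicator z).IsSymm := by
  ext a b
  simp only [transpose_apply, sym2Indicator_apply, Sym2.eq_swap]

theorem sym2Indicator_support {i j : ι} (hAs : A.IsSymm) (hi : i ∈ α) (hj : j ∈ α)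
    (hAij : 0 < A i j) (a b : ι) (hab : sym2Indicator s(i, j) a b ≠ 0) :
    a ∈ α ∧ b ∈ α ∧ 0 < A a b := by
  have hab : s(a, b) = s(i, j) := by
    by_contra h
    exact hab (if_neg h)
  rcases Sym2.eq_iff.mp hab with ⟨rfl, rfl⟩ | ⟨rfl, rfl⟩
  · exact ⟨hi, hj, hAij⟩
  · exact ⟨hj, hi, hAs.apply a b ▸ hAij⟩

theorem blockSum_sym2Indicator_eq_zero {i j : ι} (h : ¬(i ∈ τ ∧ j ∈ τ)) :
    (sym2Indicator s(i, j)).blockSum τ = 0 := by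
  refine sum_eq_zero fun a ha => sum_eq_zero fun b hb => ?_
  suffices s(a, b) ≠ s(i, j) from if_neg this
  rintro hab
  rcases Sym2.eq_iff.mp hab with ⟨rfl, rfl⟩ | ⟨rfl, rfl⟩
  exacts [h ⟨ha, hb⟩, h ⟨hb, ha⟩]

theorem blockSum_sym2Indicator_pos {i j : ι} (hi : i ∈ τ) (hj : j ∈ τ) :
    0 < (sym2Indicator s(i, j)).blockSum τ := by
  have hnonneg : ∀ a b, 0 ≤ sym2Indicator s(i, j) a b := fun a b => by
    rw [sym2Indicator_apply]; split_ifs <;> norm_num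
  calc (0 : ℝ) < sym2Indicator s(i, j) i j := by simp [sym2Indicator_apply]
    _ ≤ ∑ b ∈ τ, sym2Indicator s(i, j) i b := single_le_sum (fun b _ => hnonneg i b) hj
    _ ≤ _ := single_le_sum (fun a _ => sum_nonneg fun b _ => hnonneg a b) hi

theorem IsRigidOn.sym2_eq_of_pos (hα : A.IsRigidOn α) (hAs : A.IsSymm)
    (hβ : ∀ τ ⊆ α, τ ≠ α → A.IsTight τ → τ ⊆ β) {i j k l : ι}
    (hij : (i, j) ∈ α ×ˢ α \ β ×ˢ β) (hkl : (k, l) ∈ α ×ˢ α \ β ×ˢ β)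
    (hAij : 0 < A i j) (hAkl : 0 < A k l) : s(i, j) = s(k, l) := by
  simp only [mem_sdiff, mem_product] at hij hkl
  obtain ⟨⟨hi, hj⟩, hijβ⟩ := hij
  obtain ⟨⟨hk, hl⟩, hklβ⟩ := hkl
  have hvanish : ∀ {a b : ι}, ¬(a ∈ β ∧ b ∈ β) →
      ∀ τ ⊆ α, τ ≠ α → A.IsTight τ → (sym2Indicator s(a, b)).blockSum τ = 0 :=
    fun hab τ hτα hτne hτ => blockSum_sym2Indicator_eq_zero fun h =>
      hab ⟨hβ τ hτα hτne hτ h.1, hβ τ hτα hτne hτ h.2⟩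
  have key := congrFun (congrFun (hα.blockSum_smul_eq (sym2Indicator_isSymm _)
    (sym2Indicator_isSymm _) (sym2Indicator_support hAs hi hj hAij)
    (sym2Indicator_support hAs hk hl hAkl) (hvanish hijβ) (hvanish hklβ)) k) l
  by_contra hne
  simp only [smul_apply, sym2Indicator_apply, Ne.symm hne, if_true, if_false, smul_eq_mul,
    mul_zero, mul_one] at key
  exact (blockSum_sym2Indicator_pos hi hj).ne' key.symm

theorem sum_le_blockSum_pair_of_sym2_eq (hA : ∀ i j, 0 ≤ A i j) {O : Finset (ι × ι)} {i j : ι}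
    (hO : ∀ p ∈ O, 0 < A p.1 p.2 → s(i, j) = s(p.1, p.2)) :
    ∑ p ∈ O, A p.1 p.2 ≤ A.blockSum {i, j} := by
  rw [← sum_filter_ne_zero, blockSum_eq_sum_product]
  refine sum_le_sum_of_subset_of_nonneg (fun p hp => ?_) fun p _ _ => hA p.1 p.2
  rw [mem_filter] at hp
  have hpair := hO p hp.1 (lt_of_le_of_ne (hA p.1 p.2) (Ne.symm hp.2))
  rcases Sym2.eq_iff.mp hpair with ⟨h1, h2⟩ | ⟨h1, h2⟩ <;> simp [mem_product, ← h1, ← h2]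

theorem rowStochasticOn_pair (hAs : A.IsSymm) {i j : ι} (hij : i ≠ j) (hii : A i i = 0)
    (hjj : A j j = 0) (hpair : A.blockSum {i, j} = 2) : A.RowStochasticOn {i, j} := by
  have hji : A j i = A i j := hAs.apply i j
  simp only [blockSum, sum_pair hij, hii, hjj, hji] at hpair
  intro a ha
  rcases mem_insert.mp ha with rfl | ha
  · rw [sum_pair hij, hii]; linarith
  · rw [mem_singleton.mp ha, sum_pair hij, hjj, hji]; linarith

theorem exists_isTight_pair_of_isTight_max (hAs : A.IsSymm) (hA : ∀ i j, 0 ≤ A i j)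
    (hbd : ∀ τ ⊆ α, A.blockSum τ ≤ τ.card) (hαt : A.IsTight α) (hrig : A.IsRigidOn α)
    (hβα : β ⊆ α) (hβ : A.IsTight β) (hmax : ∀ τ ⊆ α, τ ≠ α → A.IsTight τ → τ ⊆ β)
    (hcard : β.card + 2 ≤ α.card) :
    ∃ i j, i ≠ j ∧ {i, j} = α ∧ A.IsTight {i, j} ∧
      ∀ p ∈ α ×ˢ α \ β ×ˢ β, 0 < A p.1 p.2 → s(i, j) = s(p.1, p.2) := by
  set O := α ×ˢ α \ β ×ˢ β
  have hO : ∑ p ∈ O, A p.1 p.2 = α.card - β.card := by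
    have := sum_sdiff (f := fun p : ι × ι => A p.1 p.2) (product_subset_product hβα hβα)
    rw [← blockSum_eq_sum_product, ← blockSum_eq_sum_product] at this
    unfold IsTight at hαt hβ
    linarith
  have hcard' : (β.card : ℝ) + 2 ≤ α.card := by exact_mod_cast hcard
  obtain ⟨⟨i, j⟩, hij, hAij⟩ : ∃ p ∈ O, 0 < A p.1 p.2 := by
    by_contra! h
    linarith [sum_nonpos h]
  have hclass : ∀ p ∈ O, 0 < A p.1 p.2 → s(i, j) = s(p.1, p.2) :=
    fun p hp hAp => hrig.sym2_eq_of_pos hAs hmax hij hp hAij hAp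
  obtain ⟨⟨hi, hj⟩, hijβ⟩ : (i ∈ α ∧ j ∈ α) ∧ ¬(i ∈ β ∧ j ∈ β) := by
    simpa only [O, mem_sdiff, mem_product] using hij
  have hpairα : {i, j} ⊆ α := insert_subset hi (singleton_subset_iff.mpr hj)
  -- the outer mass `α.card - β.card ≥ 2` sits on the block `{i, j}`, whose mass is at most 2
  have hpair_ge := sum_le_blockSum_pair_of_sym2_eq hA hclass
  have hpair_le := hbd {i, j} hpairα
  have hne : i ≠ j := by
    rintro rfl
    simp only [insert_eq_of_mem, mem_singleton, card_singleton, Nat.cast_one] at hpair_ge hpair_le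
    linarith
  have hpair : A.IsTight {i, j} := by
    unfold IsTight
    rw [card_pair hne] at hpair_le ⊢
    push_cast at hpair_le ⊢
    linarith
  refine ⟨i, j, hne, ?_, hpair, hclass⟩
  by_contra h
  exact hijβ (insert_subset_iff.mp (hmax {i, j} hpairα h hpair) |>.imp_right
    singleton_subset_iff.mp)

theorem rowStochasticOn_of_isTight_max (hAs : A.IsSymm) (hA : ∀ i j, 0 ≤ A i j)
    (hbd : ∀ τ ⊆ α, A.blockSum τ ≤ τ.card) (hαt : A.IsTight α) (hrig : A.IsRigidOn α)
    (hβα : β ⊆ α) (hβ : A.IsTight β) (hmax : ∀ τ ⊆ α, τ ≠ α → A.IsTight τ → τ ⊆ β)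
    (hcard : β.card + 2 ≤ α.card) : A.RowStochasticOn α := by
  obtain ⟨i, j, hne, rfl, hpair, hclass⟩ :=
    exists_isTight_pair_of_isTight_max hAs hA hbd hαt hrig hβα hβ hmax hcard
  have hβempty : β = ∅ := by
    rw [card_pair hne] at hcard
    exact card_eq_zero.mp (by omega)
  have hdiag : ∀ a ∈ ({i, j} : Finset ι), A a a = 0 := fun a ha => by
    refine le_antisymm (not_lt.mp fun hpos => hne ?_) (hA a a)
    have := hclass (a, a) (by simp [hβempty, ha]) hpos
    obtain ⟨h1, h2⟩ | ⟨h1, h2⟩ := Sym2.eq_iff.mp this <;> exact h1.trans h2.symm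
  refine rowStochasticOn_pair hAs hne (hdiag i (by simp)) (hdiag j (by simp)) ?_
  rw [hpair, card_pair hne]
  norm_num

theorem exists_isTight_cover_or_isTight_max (hA : ∀ i j, 0 ≤ A i j)
    (hbd : ∀ τ ⊆ α, A.blockSum τ ≤ τ.card) (hα : α.Nonempty) :
    (∃ γ δ, γ ⊆ α ∧ γ ≠ α ∧ A.IsTight γ ∧ δ ⊆ α ∧ δ ≠ α ∧ A.IsTight δ ∧ γ ∪ δ = α) ∨
      ∃ β ⊆ α, β ≠ α ∧ A.IsTight β ∧ ∀ τ ⊆ α, τ ≠ α → A.IsTight τ → τ ⊆ β := by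
  classical
  set F := α.powerset.filter fun τ => τ ≠ α ∧ A.IsTight τ
  have hF : ∀ τ, τ ∈ F ↔ τ ⊆ α ∧ τ ≠ α ∧ A.IsTight τ := by simp [F]
  have hempty : ∅ ∈ F := (hF ∅).2 ⟨empty_subset α, hα.ne_empty.symm, by simp [IsTight, blockSum]⟩
  obtain ⟨β, hβF, hβmax⟩ := F.exists_max_image card ⟨∅, hempty⟩
  obtain ⟨hβα, hβne, hβ⟩ := (hF β).1 hβF
  by_cases hcover : ∃ τ ⊆ α, τ ≠ α ∧ A.IsTight τ ∧ τ ∪ β = α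
  · obtain ⟨τ, hτα, hτne, hτ, hτβ⟩ := hcover
    exact Or.inl ⟨τ, β, hτα, hτne, hτ, hβα, hβne, hβ, hτβ⟩
  refine Or.inr ⟨β, hβα, hβne, hβ, fun τ hτα hτne hτ => ?_⟩
  have hτβF : τ ∪ β ∈ F := (hF _).2 ⟨union_subset hτα hβα,
    fun h => hcover ⟨τ, hτα, hτne, hτ, h⟩, (hτ.union_inter hβ hA hbd hτα hβα).1⟩
  rw [eq_of_subset_of_card_le subset_union_right (hβmax _ hτβF)]
  exact subset_union_left

theorem RowStochasticOn.union (hγ : A.RowStochasticOn γ) (hδ : A.RowStochasticOn δ)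
    (hA : ∀ i j, 0 ≤ A i j) (hαt : A.IsTight α) (hγδ : γ ∪ δ = α) : A.RowStochasticOn α := by
  have hge : ∀ i ∈ α, (1 : ℝ) ≤ ∑ j ∈ α, A i j := by
    intro i hi
    rw [← hγδ] at hi ⊢
    rcases mem_union.mp hi with hi | hi
    · rw [← hγ i hi]
      exact sum_le_sum_of_subset_of_nonneg subset_union_left fun j _ _ => hA i j
    · rw [← hδ i hi]
      exact sum_le_sum_of_subset_of_nonneg subset_union_right fun j _ _ => hA i j
  have htotal : ∑ i ∈ α, (1 : ℝ) = ∑ i ∈ α, ∑ j ∈ α, A i j := by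
    rw [sum_const, nsmul_one]
    exact hαt.symm
  exact fun i hi => ((sum_eq_sum_iff_of_le hge).mp htotal i hi).symm

theorem union_eq_of_isTight_card_add_one (hA : ∀ i j, 0 ≤ A i j)
    (hbd : ∀ τ ⊆ α, A.blockSum τ ≤ τ.card)
    (hR : ∀ τ ⊆ α, τ.card + 1 = α.card → ¬A.IsTight τ) (hγα : γ ⊆ α) (hδα : δ ⊆ α)
    (hδ : A.IsTight δ) (hγδ : γ ∪ δ = α) (hσγ : σ ⊆ γ) (hσcard : σ.card + 1 = γ.card)
    (hσ : A.IsTight σ) : σ ∪ δ = α := by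
  have hσδα : σ ∪ δ ⊆ α := union_subset (hσγ.trans hγα) hδα
  by_contra hne
  have hlt : (σ ∪ δ).card < α.card := card_lt_card (ssubset_of_subset_of_ne hσδα hne)
  have hle : α.card ≤ (σ ∪ δ).card + 1 :=
    calc α.card = (γ ∪ δ).card := by rw [hγδ]
      _ ≤ ((γ \ σ) ∪ (σ ∪ δ)).card :=
        card_le_card fun x => by simp only [mem_union, mem_sdiff]; tauto
      _ ≤ (γ \ σ).card + (σ ∪ δ).card := card_union_le _ _
      _ = (σ ∪ δ).card + 1 := by rw [card_sdiff_of_subset hσγ]; omega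
  exact hR _ hσδα (by omega) (hσ.union_inter hδ hA hbd (hσγ.trans hγα) hδα).1

/-- Induction on `γ.card + δ.card`: a block of the cover that is not row-stochastic is replaced
by its tight subblock of one size less. -/
theorem rowStochasticOn_of_isTight_cover (hA : ∀ i j, 0 ≤ A i j)
    (hbd : ∀ τ ⊆ α, A.blockSum τ ≤ τ.card) (hαt : A.IsTight α)
    (hR : ∀ τ ⊆ α, τ.card + 1 = α.card → ¬A.IsTight τ)
    (hsub : ∀ γ ⊆ α, γ ≠ α → A.IsTight γ →
      A.RowStochasticOn γ ∨ ∃ σ ⊆ γ, σ.card + 1 = γ.card ∧ A.IsTight σ)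
    (hγα : γ ⊆ α) (hγne : γ ≠ α) (hγ : A.IsTight γ) (hδα : δ ⊆ α) (hδne : δ ≠ α)
    (hδ : A.IsTight δ) (hγδ : γ ∪ δ = α) : A.RowStochasticOn α := by
  induction hk : γ.card + δ.card using Nat.strong_induction_on generalizing γ δ with
  | _ k ih =>
  have hproper : ∀ {σ τ : Finset ι}, σ ⊆ τ → σ.card + 1 = τ.card → τ ⊆ α → σ ≠ α :=
    fun _ hcard hτα h => by
      subst h
      have := card_le_card hτα
      omega
  rcases hsub γ hγα hγne hγ with hγs | ⟨σ, hσγ, hσcard, hσ⟩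
  · rcases hsub δ hδα hδne hδ with hδs | ⟨σ, hσδ, hσcard, hσ⟩
    · exact hγs.union hδs hA hαt hγδ
    · refine ih _ (by omega) hγα hγne hγ (hσδ.trans hδα) (hproper hσδ hσcard hδα) hσ ?_ rfl
      rw [union_comm, union_eq_of_isTight_card_add_one hA hbd hR hδα hγα hγ
        (by rwa [union_comm]) hσδ hσcard hσ]
  · exact ih _ (by omega) (hσγ.trans hγα) (hproper hσγ hσcard hγα) hσ hδα hδne hδ
      (union_eq_of_isTight_card_add_one hA hbd hR hγα hδα hδ hγδ hσγ hσcard hσ) rfl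

theorem rowStochasticOn_or_exists_isTight_card_add_one (hAs : A.IsSymm)
    (hA : ∀ i j, 0 ≤ A i j) (α : Finset ι) (hbd : ∀ τ ⊆ α, A.blockSum τ ≤ τ.card)
    (hαt : A.IsTight α) (hrig : A.IsRigidOn α) :
    A.RowStochasticOn α ∨ ∃ δ ⊆ α, δ.card + 1 = α.card ∧ A.IsTight δ := by
  induction α using Finset.strongInduction with
  | H α ih =>
  by_cases hR : ∃ δ ⊆ α, δ.card + 1 = α.card ∧ A.IsTight δ
  · exact Or.inr hR
  push Not at hR
  left
  rcases α.eq_empty_or_nonempty with rfl | hα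
  · simp [RowStochasticOn]
  have hsub : ∀ γ ⊆ α, γ ≠ α → A.IsTight γ →
      A.RowStochasticOn γ ∨ ∃ σ ⊆ γ, σ.card + 1 = γ.card ∧ A.IsTight σ :=
    fun γ hγα hγne hγ => ih γ (ssubset_of_subset_of_ne hγα hγne)
      (fun τ hτ => hbd τ (hτ.trans hγα)) hγ (hrig.of_isTight hA hbd hγα hγ)
  rcases exists_isTight_cover_or_isTight_max hA hbd hα with
    ⟨γ, δ, hγα, hγne, hγ, hδα, hδne, hδ, hγδ⟩ | ⟨β, hβα, hβne, hβ, hmax⟩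
  · exact rowStochasticOn_of_isTight_cover hA hbd hαt hR hsub hγα hγne hγ hδα hδne hδ hγδ
  · refine rowStochasticOn_of_isTight_max hAs hA hbd hαt hrig hβα hβ hmax ?_
    have hlt := card_lt_card (ssubset_of_subset_of_ne hβα hβne)
    by_contra hcard
    exact hR β hβα (by omega) hβ

end Matrix

open Filter Topology

theorem tendsto_add_mul_nhds_zero (a c : ℝ) :
    Tendsto (fun t : ℝ => a + t * c) (𝓝 0) (𝓝 a) := by
  have hcont : Continuous fun t : ℝ => a + t * c := by fun_prop
  exact hcont.tendsto' 0 a (by simp)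

theorem eventually_add_smul_mem_U1_s5 {m : ℕ} {A C : Matrix (Fin m) (Fin m) ℝ} (hA : A ∈ U1 m)
    (hCs : C.IsSymm) (hC : ∀ i j, C i j ≠ 0 → 0 < A i j)
    (hCt : ∀ τ, A.IsTight τ → C.blockSum τ = 0) :
    ∀ᶠ t in 𝓝 (0 : ℝ), A + t • C ∈ U1 m := by
  obtain ⟨hAs, hAnn, hAbd, hAtot⟩ := hA
  have hentry : ∀ i j, ∀ᶠ t in 𝓝 (0 : ℝ), 0 ≤ A i j + t * C i j := fun i j => by
    by_cases hij : C i j = 0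
    · simp [hij, hAnn i j]
    · exact ((tendsto_add_mul_nhds_zero _ _).eventually_const_lt (hC i j hij)).mono
        fun _ => le_of_lt
  have hblock : ∀ τ : Finset (Fin m),
      ∀ᶠ t in 𝓝 (0 : ℝ), A.blockSum τ + t * C.blockSum τ ≤ τ.card := fun τ => by
    by_cases hτ : A.IsTight τ
    · refine Eventually.of_forall fun t => ?_
      rw [hCt τ hτ, mul_zero, add_zero]
      exact hAbd τ
    · exact ((tendsto_add_mul_nhds_zero _ _).eventually_lt_const
        (lt_of_le_of_ne (hAbd τ) hτ)).mono fun _ => le_of_lt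
  have htot : C.blockSum univ = 0 := hCt _ (by simpa [Matrix.IsTight, Matrix.blockSum])
  filter_upwards [eventually_all.mpr fun i => eventually_all.mpr (hentry i),
    eventually_all.mpr hblock] with t hent hblk
  refine ⟨?_, fun i j => hent i j, fun τ => ?_, ?_⟩
  · simp only [Matrix.IsSymm, Matrix.transpose_add, Matrix.transpose_smul, hAs.eq, hCs.eq]
  · show (A + t • C).blockSum τ ≤ τ.card
    simpa using hblk τ
  · show (A + t • C).blockSum univ = m
    rw [Matrix.blockSum_add, Matrix.blockSum_smul, htot, mul_zero, add_zero]
    exact hAtot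

theorem IsExtremePt.isRigidOn_univ {m : ℕ} {A : Matrix (Fin m) (Fin m) ℝ}
    (h : IsExtremePt (U1 m) A) : A.IsRigidOn univ := by
  intro C hCs hC hCt
  have hplus := eventually_add_smul_mem_U1_s5 h.1 hCs (fun i j hij => (hC i j hij).2.2)
    fun τ hτ => hCt τ (subset_univ τ) hτ
  have hminus : ∀ᶠ t in 𝓝 (0 : ℝ), A + (-t) • C ∈ U1 m :=
    (continuous_neg.tendsto' (0 : ℝ) 0 neg_zero).eventually hplus
  obtain ⟨t, ⟨hp, hm⟩, ht⟩ :=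
    (((hplus.and hminus).filter_mono nhdsWithin_le_nhds).and self_mem_nhdsWithin).exists
      (f := 𝓝[≠] (0 : ℝ))
  have hpm := h.2 _ hp _ hm (by ext i j; simp; ring)
  ext i j
  have hij := congrFun (congrFun hpm i) j
  simp only [Matrix.add_apply, Matrix.smul_apply, smul_eq_mul] at hij
  have : t * C i j = 0 := by linarith
  exact (mul_eq_zero.mp this).resolve_left ht

/-- Every extreme point of `U_1` is either stochastic or has a saturated principal
block of size `m - 1`. -/
theorem extreme_U1_stochastic_or_saturated (m : ℕ) (A : Matrix (Fin m) (Fin m) ℝ)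
    (h : IsExtremePt (U1 m) A) :
    IsStochastic m A ∨
      ∃ α : Finset (Fin m), α.card = m - 1 ∧
        ∑ i ∈ α, ∑ j ∈ α, A i j = (m : ℝ) - 1 := by
  obtain ⟨hAs, hAnn, hAbd, hAtot⟩ := h.1
  have hunivt : A.IsTight univ := by simpa [Matrix.IsTight, Matrix.blockSum] using hAtot
  rcases A.rowStochasticOn_or_exists_isTight_card_add_one hAs hAnn univ
      (fun τ _ => hAbd τ) hunivt h.isRigidOn_univ with hst | ⟨δ, -, hδcard, hδ⟩
  · exact Or.inl ⟨hAnn, fun i => by simpa using hst i (mem_univ i)⟩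
  · rw [Finset.card_univ, Fintype.card_fin] at hδcard
    refine Or.inr ⟨δ, by omega, ?_⟩
    have hcast : (δ.card : ℝ) + 1 = m := by exact_mod_cast hδcard
    exact (hδ : A.blockSum δ = δ.card).trans (by linarith)
end

section
/- Let A = (a_ij) be a symmetric m×m real matrix with nonnegative entries. There exists a stochastic matrix T such that A = (1/2)(T + Tᵀ) if and only if ∑_{i∈α} ∑_{j∈α} a_ij ≤ |α| for every subset α ⊆ {1,...,m} and ∑_{i,j=1}^m a_ij = m. -/
open Finset Matrix

variable {ι : Type*}

lemma sum_sum_half_smul_add_transpose (T : Matrix ι ι ℝ) (s : Finset ι) :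
    ∑ i ∈ s, ∑ j ∈ s, ((1 / 2 : ℝ) • (T + Tᵀ)) i j = ∑ i ∈ s, ∑ j ∈ s, T i j := by
  simp only [Matrix.smul_apply, Matrix.add_apply, transpose_apply, smul_eq_mul, ← mul_sum,
    sum_add_distrib, sum_comm (f := fun i j => T j i)]
  ring

lemma sum_sum_le_card_of_mem_rowStochastic [Fintype ι] [DecidableEq ι] {T : Matrix ι ι ℝ}
    (hT : T ∈ rowStochastic ℝ ι) (s : Finset ι) : ∑ i ∈ s, ∑ j ∈ s, T i j ≤ s.card :=
  calc ∑ i ∈ s, ∑ j ∈ s, T i j ≤ ∑ i ∈ s, ∑ j, T i j :=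
        sum_le_sum fun i _ => sum_le_sum_of_subset_of_nonneg (subset_univ s) fun j _ _ =>
          nonneg_of_mem_rowStochastic hT
    _ = s.card := by simp [sum_row_of_mem_rowStochastic hT]

section MaxPairing

variable [Fintype ι]

def maxPairing (A : Matrix ι ι ℝ) (y : ι → ℝ) : ℝ := ∑ i, ∑ j, A i j * max (y i) (y j)

lemma maxPairing_const (A : Matrix ι ι ℝ) (c : ℝ) :
    maxPairing A (fun _ => c) = c * ∑ i, ∑ j, A i j := by
  simp [maxPairing, mul_sum, mul_comm]

lemma maxPairing_add_of_monotone (A : Matrix ι ι ℝ) {f g : ℝ → ℝ} (hf : Monotone f)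
    (hg : Monotone g) (y : ι → ℝ) :
    maxPairing A (fun i => f (y i) + g (y i)) = maxPairing A (f ∘ y) + maxPairing A (g ∘ y) := by
  simp only [maxPairing, ← sum_add_distrib, ← mul_add, Function.comp_apply]
  refine sum_congr rfl fun i _ => sum_congr rfl fun j _ => ?_
  rw [← hf.map_max, ← hg.map_max]
  exact congrArg _ ((hf.add hg).map_max).symm

lemma maxPairing_ite_mem [DecidableEq ι] (A : Matrix ι ι ℝ) {c : ℝ} (hc : 0 ≤ c)
    (s : Finset ι) :
    maxPairing A (fun i => if i ∈ s then c else 0) =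
      c * (∑ i, ∑ j, A i j - ∑ i ∈ sᶜ, ∑ j ∈ sᶜ, A i j) := by
  have hmax : ∀ i j, A i j * max (if i ∈ s then c else 0) (if j ∈ s then c else 0) =
      c * A i j - c * if i ∈ sᶜ ∧ j ∈ sᶜ then A i j else 0 := by
    intro i j
    by_cases hi : i ∈ s <;> by_cases hj : j ∈ s <;> simp [hi, hj, hc, mul_comm]
  have hcompl : ∑ i, ∑ j, (if i ∈ sᶜ ∧ j ∈ sᶜ then A i j else 0) = ∑ i ∈ sᶜ, ∑ j ∈ sᶜ, A i j := by
    simp only [ite_and, sum_ite_irrel, sum_ite_mem, univ_inter, sum_const_zero]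
  simp only [maxPairing, hmax, sum_sub_distrib, ← mul_sum, hcompl, mul_sub]

variable {A : Matrix ι ι ℝ} (hblock : ∀ s : Finset ι, ∑ i ∈ s, ∑ j ∈ s, A i j ≤ s.card)
  (htot : ∑ i, ∑ j, A i j = Fintype.card ι)
include hblock htot

lemma sum_ite_mem_le_maxPairing [DecidableEq ι] {c : ℝ} (hc : 0 ≤ c) (s : Finset ι) :
    ∑ i, (if i ∈ s then c else 0) ≤ maxPairing A (fun i => if i ∈ s then c else 0) := by
  have hcard : (s.card : ℝ) + sᶜ.card = Fintype.card ι := by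
    exact_mod_cast s.card_add_card_compl
  rw [maxPairing_ite_mem A hc, Fintype.sum_ite_mem, sum_const, nsmul_eq_mul, mul_comm, htot]
  exact mul_le_mul_of_nonneg_left (by linarith [hblock sᶜ]) hc

theorem sum_le_maxPairing (y : ι → ℝ) : ∑ i, y i ≤ maxPairing A y := by
  classical
  suffices ∀ V : Finset ℝ, ∀ y : ι → ℝ, (∀ i, y i ∈ V) → ∑ i, y i ≤ maxPairing A y from
    this _ y fun i => mem_image_of_mem y (mem_univ i)
  intro V
  induction V using Finset.induction_on_max with
  | empty =>
    intro y hy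
    have : IsEmpty ι := ⟨fun i => by simpa using hy i⟩
    simp [maxPairing]
  | insert v V hlt ih =>
    intro y hy
    rcases V.eq_empty_or_nonempty with rfl | hV
    · obtain rfl : y = fun _ => v := funext fun i => by simpa using hy i
      simp [maxPairing_const, htot, mul_comm]
    -- Split `y` at its second largest value `u` into `min y u`, with values in `V`,
    -- and the top layer `(v - u) • 1_{u < y}`.
    obtain ⟨u, huV, hVu⟩ : ∃ u ∈ V, ∀ x ∈ V, x ≤ u := V.exists_max_image id hV
    have hu : u < v := hlt u huV
    have hmin : ∀ i, min (y i) u ∈ V := by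
      intro i
      rcases mem_insert.mp (hy i) with hi | hi
      · rwa [hi, min_eq_right hu.le]
      · rwa [min_eq_left (hVu _ hi)]
    have htop : ∀ i, max (y i - u) 0 = if i ∈ univ.filter (u < y ·) then v - u else 0 := by
      intro i
      rcases mem_insert.mp (hy i) with hi | hi
      · simp [hi, hu, hu.le]
      · have hyu : y i ≤ u := hVu _ hi
        simp [hyu, not_lt.mpr hyu]
    have hsplit : y = fun i => min (y i) u + max (y i - u) 0 := by
      funext i; rcases le_total (y i) u with h | h <;> simp [h]
    have hmono : Monotone fun a : ℝ => max (a - u) 0 := fun a b hab =>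
      max_le_max_right 0 (sub_le_sub_right hab u)
    rw [hsplit, maxPairing_add_of_monotone A (fun a b hab => min_le_min_right u hab) hmono,
      sum_add_distrib]
    simp only [Function.comp_def, htop]
    exact add_le_add (ih _ hmin) (sum_ite_mem_le_maxPairing hblock htot (by linarith) _)

end MaxPairing

lemma mem_of_forall_exists_dotProduct_le [Fintype ι] {C : Set (ι → ℝ)} (hC : IsClosed C)
    (hCc : Convex ℝ C) {p : ι → ℝ} (h : ∀ y, ∃ c ∈ C, y ⬝ᵥ p ≤ y ⬝ᵥ c) : p ∈ C := by
  classical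
  by_contra hp
  obtain ⟨g, s, hgC, hgp⟩ := geometric_hahn_banach_closed_point hCc hC hp
  set y : ι → ℝ := fun i => g fun j => if i = j then 1 else 0
  have hg : ∀ z, g z = y ⬝ᵥ z := fun z => by
    have := LinearMap.pi_apply_eq_sum_univ (g : (ι → ℝ) →ₗ[ℝ] ℝ) z
    rw [ContinuousLinearMap.coe_coe] at this
    simp [this, y, dotProduct, mul_comm]
  obtain ⟨c, hc, hle⟩ := h y
  linarith [hgC c hc, hg c, hg p]

def symmetrizationFiber (A : Matrix ι ι ℝ) : Set (Matrix ι ι ℝ) :=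
  {T | (∀ i j, 0 ≤ T i j) ∧ (1 / 2 : ℝ) • (T + Tᵀ) = A}

lemma mem_symmetrizationFiber {A T : Matrix ι ι ℝ} :
    T ∈ symmetrizationFiber A ↔ ∀ i j, 0 ≤ T i j ∧ T i j + T j i = 2 * A i j := by
  simp only [symmetrizationFiber, Set.mem_ofPred_eq, ← Matrix.ext_iff, Matrix.smul_apply,
    Matrix.add_apply, transpose_apply, smul_eq_mul, ← forall_and]
  exact forall₂_congr fun i j => and_congr_right' ⟨fun h => by linarith, fun h => by linarith⟩

lemma isCompact_symmetrizationFiber (A : Matrix ι ι ℝ) : IsCompact (symmetrizationFiber A) := by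
  have hclosed : IsClosed (symmetrizationFiber A) := by
    simp only [symmetrizationFiber, Set.ofPred_and, Set.ofPred_forall]
    exact (isClosed_iInter fun i => isClosed_iInter fun j =>
        isClosed_le continuous_const (continuous_id.matrix_elem i j)).inter
      (isClosed_eq (f := fun T : Matrix ι ι ℝ => (1 / 2 : ℝ) • (T + Tᵀ)) (by fun_prop)
        continuous_const)
  refine (isCompact_univ_pi fun i => isCompact_univ_pi fun j =>
    isCompact_Icc (a := 0) (b := 2 * A i j)).of_isClosed_subset hclosed fun T hT i _ j _ => ?_
  obtain ⟨hTij, hsum⟩ := mem_symmetrizationFiber.mp hT i j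
  exact ⟨hTij, by linarith [(mem_symmetrizationFiber.mp hT j i).1]⟩

lemma convex_symmetrizationFiber (A : Matrix ι ι ℝ) : Convex ℝ (symmetrizationFiber A) := by
  intro S hS T hT a b ha hb hab
  rw [mem_symmetrizationFiber] at hS hT ⊢
  intro i j
  simp only [Matrix.add_apply, Matrix.smul_apply, smul_eq_mul]
  refine ⟨add_nonneg (mul_nonneg ha (hS i j).1) (mul_nonneg hb (hT i j).1), ?_⟩
  linear_combination a * (hS i j).2 + b * (hT i j).2 + 2 * A i j * hab

/-- The point of `symmetrizationFiber A` maximizing `y ⬝ᵥ (T *ᵥ 1)`. -/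
noncomputable def orientation (A : Matrix ι ι ℝ) (y : ι → ℝ) : Matrix ι ι ℝ :=
  Matrix.of fun i j => A i j * (1 + Real.sign (y i - y j))

lemma orientation_mem_symmetrizationFiber {A : Matrix ι ι ℝ} (hsym : A.IsSymm)
    (hpos : ∀ i j, 0 ≤ A i j) (y : ι → ℝ) : orientation A y ∈ symmetrizationFiber A := by
  refine mem_symmetrizationFiber.mpr fun i j => ⟨mul_nonneg (hpos i j) ?_, ?_⟩
  · rcases Real.sign_apply_eq (y i - y j) with h | h | h <;> rw [h] <;> norm_num
  · simp only [orientation, of_apply, hsym.apply i j, ← neg_sub (y i), Real.sign_neg]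
    ring

lemma dotProduct_orientation_mulVec_one [Fintype ι] {A : Matrix ι ι ℝ} (hsym : A.IsSymm)
    (y : ι → ℝ) : y ⬝ᵥ (orientation A y *ᵥ 1) = maxPairing A y := by
  set T := orientation A y
  have hpair : ∀ i j, y i * T i j + y j * T j i = 2 * (A i j * max (y i) (y j)) := by
    intro i j
    simp only [T, orientation, of_apply, hsym.apply i j, ← neg_sub (y i), Real.sign_neg]
    rcases lt_trichotomy (y i) (y j) with h | h | h
    · rw [Real.sign_of_neg (sub_neg.mpr h), max_eq_right h.le]; ring
    · rw [h, sub_self, Real.sign_zero, max_self]; ring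
    · rw [Real.sign_of_pos (sub_pos.mpr h), max_eq_left h.le]; ring
  calc y ⬝ᵥ (T *ᵥ 1) = ∑ i, ∑ j, y i * T i j := by
        simp [dotProduct, mulVec, mul_sum]
    _ = (∑ i, ∑ j, y i * T i j + ∑ i, ∑ j, y j * T j i) / 2 := by
        rw [sum_comm (f := fun i j => y j * T j i)]; ring
    _ = maxPairing A y := by
        simp only [← sum_add_distrib, hpair]
        simp only [maxPairing, ← mul_sum]; ring

theorem exists_rowStochastic_eq_half_smul_add_transpose_iff [Fintype ι] [DecidableEq ι]
    {A : Matrix ι ι ℝ} (hsym : A.IsSymm) (hpos : ∀ i j, 0 ≤ A i j) :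
    (∃ T ∈ rowStochastic ℝ ι, A = (1 / 2 : ℝ) • (T + Tᵀ)) ↔
      (∀ s : Finset ι, ∑ i ∈ s, ∑ j ∈ s, A i j ≤ s.card) ∧
        ∑ i, ∑ j, A i j = Fintype.card ι := by
  constructor
  · rintro ⟨T, hT, rfl⟩
    simp only [sum_sum_half_smul_add_transpose]
    exact ⟨sum_sum_le_card_of_mem_rowStochastic hT, by simp [sum_row_of_mem_rowStochastic hT]⟩
  · rintro ⟨hblock, htot⟩
    have hC : IsCompact ((· *ᵥ 1) '' symmetrizationFiber A) :=
      (isCompact_symmetrizationFiber A).image (by fun_prop)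
    have hCc : Convex ℝ ((· *ᵥ (1 : ι → ℝ)) '' symmetrizationFiber A) :=
      (convex_symmetrizationFiber A).is_linear_image
        ⟨fun S T => add_mulVec S T 1, fun c T => smul_mulVec c T 1⟩
    obtain ⟨T, hT, hT1⟩ := mem_of_forall_exists_dotProduct_le hC.isClosed hCc fun y =>
      ⟨_, ⟨orientation A y, orientation_mem_symmetrizationFiber hsym hpos y, rfl⟩, by
        rw [dotProduct_one, dotProduct_orientation_mulVec_one hsym]
        exact sum_le_maxPairing hblock htot y⟩
    exact ⟨T, ⟨hT.1, hT1⟩, hT.2.symm⟩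

/-- A symmetric nonnegative matrix `A` is the symmetrization of a stochastic matrix iff
all its principal-block sums are at most the block size and its total sum is `m`. -/
theorem symmetrization_of_stochastic_iff (m : ℕ) (A : Matrix (Fin m) (Fin m) ℝ)
    (hsym : A.IsSymm) (hpos : ∀ i j, 0 ≤ A i j) :
    (∃ T, IsStochastic m T ∧ A = (1 / 2 : ℝ) • (T + T.transpose)) ↔
      ((∀ α : Finset (Fin m), ∑ i ∈ α, ∑ j ∈ α, A i j ≤ (α.card : ℝ)) ∧
        ∑ i, ∑ j, A i j = (m : ℝ)) := by
  simpa [IsStochastic, ← mem_rowStochastic_iff_sum] using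
    exists_rowStochastic_eq_half_smul_add_transpose_iff hsym hpos
end

section
/- Let A = (a_ij) be a symmetric m×m real matrix with nonnegative entries. The inequality min_{1≤i≤m} x_i ≤ ⟨Ax, x⟩ ≤ max_{1≤i≤m} x_i holds for all x ∈ S^{m-1} if and only if ∑_{i∈α} ∑_{j∈α} a_ij ≤ |α| for every subset α ⊆ {1,...,m}, with equality when α = {1,...,m} (i.e., ∑_{i,j=1}^m a_ij = m). -/
/-!
Testing the two inequalities on the uniform distributions `1_α / |α|` gives the block
conditions. Conversely, every pair in `s × t` or `t × s` lies in `(s ∪ t)²`, and every pair in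
both lies in `(s ∩ t)²`; so for nonnegative `A` the block conditions give
`⟨A 1_s, 1_t⟩ + ⟨A 1_t, 1_s⟩ ≤ |s| + |t|` for all `s, t`. A linear functional bounded by `c` at
every vertex `1_s` of the unit cube is bounded by `c M` on the cube `[0, M]^ι`; using this once in
each variable bounds `⟨A x, x⟩` by `(∑ x) · max x`. For the lower bound, expand `⟨A x, x⟩` around
`μ = min x`: the block condition for the complement of a point together with `∑ A = m` shows that
every row-plus-column sum of `A` is at least `1`.
-/

open Finset

section
variable {ι : Type*} [Fintype ι]

theorem sum_mul_le_mul_of_forall_sum_le {w x : ι → ℝ} {c M : ℝ}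
    (hw : ∀ s : Finset ι, ∑ i ∈ s, w i ≤ c) (hx₀ : ∀ i, 0 ≤ x i) (hxM : ∀ i, x i ≤ M)
    (hM : 0 ≤ M) : ∑ i, w i * x i ≤ c * M := by
  classical
  calc ∑ i, w i * x i ≤ ∑ i, if 0 ≤ w i then w i * M else 0 := by
        gcongr with i
        split_ifs with h
        · exact mul_le_mul_of_nonneg_left (hxM i) h
        · exact mul_nonpos_of_nonpos_of_nonneg (not_le.mp h).le (hx₀ i)
    _ = (∑ i ∈ univ.filter (0 ≤ w ·), w i) * M := by rw [sum_mul, sum_filter]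
    _ ≤ c * M := mul_le_mul_of_nonneg_right (hw _) hM

variable {A : Matrix ι ι ℝ}

theorem sum_sum_eq_sum_sum_ite [DecidableEq ι] (s t : Finset ι) :
    ∑ i ∈ s, ∑ j ∈ t, A i j = ∑ i, ∑ j, if i ∈ s ∧ j ∈ t then A i j else 0 := by
  simp [ite_and]

theorem sum_sum_add_sum_sum_le_union_add_inter [DecidableEq ι] (hA : ∀ i j, 0 ≤ A i j)
    (s t : Finset ι) :
    ∑ i ∈ s, ∑ j ∈ t, A i j + ∑ i ∈ t, ∑ j ∈ s, A i j ≤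
      ∑ i ∈ s ∪ t, ∑ j ∈ s ∪ t, A i j + ∑ i ∈ s ∩ t, ∑ j ∈ s ∩ t, A i j := by
  simp only [sum_sum_eq_sum_sum_ite, ← sum_add_distrib]
  refine sum_le_sum fun i _ => sum_le_sum fun j _ => ?_
  have := hA i j
  by_cases i ∈ s <;> by_cases i ∈ t <;> by_cases j ∈ s <;> by_cases j ∈ t <;> simp [*]

theorem sum_sum_add_sum_sum_le_card_add_card (hA : ∀ i j, 0 ≤ A i j)
    (hblock : ∀ s : Finset ι, ∑ i ∈ s, ∑ j ∈ s, A i j ≤ #s) (s t : Finset ι) :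
    ∑ i ∈ s, ∑ j ∈ t, A i j + ∑ i ∈ t, ∑ j ∈ s, A i j ≤ #s + #t := by
  classical
  have hcard : ((#(s ∪ t) : ℕ) : ℝ) + #(s ∩ t) = #s + #t := by
    exact_mod_cast card_union_add_card_inter s t
  linarith [sum_sum_add_sum_sum_le_union_add_inter hA s t, hblock (s ∪ t), hblock (s ∩ t)]

theorem sum_sum_add_mul_le_card_mul_add_sum (hA : ∀ i j, 0 ≤ A i j)
    (hblock : ∀ s : Finset ι, ∑ i ∈ s, ∑ j ∈ s, A i j ≤ #s) {y : ι → ℝ} {N : ℝ}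
    (hy₀ : ∀ j, 0 ≤ y j) (hyN : ∀ j, y j ≤ N) (hN : 0 ≤ N) (s : Finset ι) :
    ∑ i ∈ s, ∑ j, (A i j + A j i) * y j ≤ #s * N + ∑ j, y j := by
  have hw : ∀ t : Finset ι, ∑ j ∈ t, (∑ i ∈ s, (A i j + A j i) - 1) ≤ #s := fun t => by
    have := sum_sum_add_sum_sum_le_card_add_card hA hblock s t
    simp only [sum_sub_distrib, sum_add_distrib, sum_const, nsmul_one]
    rw [sum_comm (s := t)]
    linarith
  have := sum_mul_le_mul_of_forall_sum_le hw hy₀ hyN hN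
  simp only [sub_mul, one_mul, sum_sub_distrib, sum_mul] at this
  rw [sum_comm]
  linarith

theorem sum_sum_add_mul_mul_eq_two_mul (x : ι → ℝ) :
    ∑ i, (∑ j, (A i j + A j i) * x j) * x i = 2 * ∑ i, ∑ j, A i j * x i * x j := by
  simp only [add_mul, sum_add_distrib, sum_mul, two_mul]
  rw [sum_comm (f := fun i j => A j i * x j * x i)]
  congr 1
  exact sum_congr rfl fun i _ => sum_congr rfl fun j _ => mul_right_comm _ _ _

theorem sum_sum_mul_le_sum_mul (hA : ∀ i j, 0 ≤ A i j)
    (hblock : ∀ s : Finset ι, ∑ i ∈ s, ∑ j ∈ s, A i j ≤ #s) {x : ι → ℝ} {M : ℝ}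
    (hx₀ : ∀ i, 0 ≤ x i) (hxM : ∀ i, x i ≤ M) (hM : 0 ≤ M) :
    ∑ i, ∑ j, A i j * x i * x j ≤ (∑ i, x i) * M := by
  have hw : ∀ s : Finset ι, ∑ i ∈ s, (∑ j, (A i j + A j i) * x j - M) ≤ ∑ i, x i := fun s => by
    have := sum_sum_add_mul_le_card_mul_add_sum hA hblock hx₀ hxM hM s
    simp only [sum_sub_distrib, sum_const, nsmul_eq_mul]
    linarith
  have := sum_mul_le_mul_of_forall_sum_le hw hx₀ hxM hM
  simp only [sub_mul, sum_sub_distrib, sum_sum_add_mul_mul_eq_two_mul, ← mul_sum] at this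
  linarith

theorem one_le_sum_add (hA : ∀ i j, 0 ≤ A i j)
    (hblock : ∀ s : Finset ι, ∑ i ∈ s, ∑ j ∈ s, A i j ≤ #s)
    (htot : ∑ i, ∑ j, A i j = Fintype.card ι) (j : ι) :
    1 ≤ ∑ i, (A i j + A j i) := by
  classical
  have hsplit : ∑ i, ∑ k, A i k =
      ∑ i ∈ univ.erase j, ∑ k ∈ univ.erase j, A i k + ∑ i ∈ univ.erase j, A i j + ∑ k, A j k := by
    rw [← sum_erase_add _ (fun i => ∑ k, A i k) (mem_univ j), ← sum_add_distrib]
    congr 2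
    exact funext fun i => (sum_erase_add _ (A i) (mem_univ j)).symm
  have hcol : ∑ i ∈ univ.erase j, A i j ≤ ∑ i, A i j :=
    sum_le_sum_of_subset_of_nonneg (erase_subset _ _) fun i _ _ => hA i j
  have hcard : (#(univ.erase j) : ℝ) + 1 = Fintype.card ι := by
    exact_mod_cast card_erase_add_one (mem_univ j)
  rw [sum_add_distrib]
  linarith [hblock (univ.erase j)]

theorem sum_mul_le_sum_sum_mul (hA : ∀ i j, 0 ≤ A i j)
    (hblock : ∀ s : Finset ι, ∑ i ∈ s, ∑ j ∈ s, A i j ≤ #s)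
    (htot : ∑ i, ∑ j, A i j = Fintype.card ι) {x : ι → ℝ} {μ : ℝ} (hμ : 0 ≤ μ)
    (hxμ : ∀ i, μ ≤ x i) :
    (∑ i, x i) * μ ≤ ∑ i, ∑ j, A i j * x i * x j := by
  have hexpand : ∑ i, ∑ j, A i j * x i * x j =
      ∑ i, ∑ j, A i j * (x i - μ) * (x j - μ) +
        μ * ∑ j, (∑ i, (A i j + A j i)) * (x j - μ) + μ ^ 2 * ∑ i, ∑ j, A i j := by
    have hmid : ∑ j, (∑ i, (A i j + A j i)) * (x j - μ) =
        ∑ i, ∑ j, A i j * ((x i - μ) + (x j - μ)) := by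
      simp only [add_mul, sum_add_distrib, sum_mul, mul_add]
      rw [add_comm, sum_comm (f := fun j i => A i j * (x j - μ))]
    rw [hmid, mul_sum, mul_sum, ← sum_add_distrib, ← sum_add_distrib]
    refine sum_congr rfl fun i _ => ?_
    rw [mul_sum, mul_sum, ← sum_add_distrib, ← sum_add_distrib]
    exact sum_congr rfl fun j _ => by ring
  have hquad : 0 ≤ ∑ i, ∑ j, A i j * (x i - μ) * (x j - μ) :=
    sum_nonneg fun i _ => sum_nonneg fun j _ =>
      mul_nonneg (mul_nonneg (hA i j) (sub_nonneg.2 (hxμ i))) (sub_nonneg.2 (hxμ j))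
  have hlin : ∑ j, (x j - μ) ≤ ∑ j, (∑ i, (A i j + A j i)) * (x j - μ) :=
    sum_le_sum fun j _ =>
      le_mul_of_one_le_left (sub_nonneg.2 (hxμ j)) (one_le_sum_add hA hblock htot j)
  simp only [sum_sub_distrib, sum_const, card_univ, nsmul_eq_mul] at hlin
  rw [htot] at hexpand
  nlinarith

theorem sum_sum_mul_ite_mem [DecidableEq ι] (s : Finset ι) (c : ℝ) :
    ∑ i, ∑ j, A i j * (if i ∈ s then c else 0) * (if j ∈ s then c else 0) =
      c ^ 2 * ∑ i ∈ s, ∑ j ∈ s, A i j := by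
  simp only [sum_sum_eq_sum_sum_ite, mul_sum]
  refine sum_congr rfl fun i _ => sum_congr rfl fun j _ => ?_
  by_cases hi : i ∈ s <;> by_cases hj : j ∈ s <;> simp [hi, hj]
  ring

theorem ite_mem_inv_card_mem_stdSimplex [DecidableEq ι] {s : Finset ι} (hs : s.Nonempty) :
    (fun i => if i ∈ s then (#s : ℝ)⁻¹ else 0) ∈ stdSimplex ℝ ι := by
  refine ⟨fun i => by positivity, ?_⟩
  simp [hs.card_pos.ne']

theorem sum_sum_le_card_of_le_sup' (hne : (univ : Finset ι).Nonempty)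
    (h : ∀ x ∈ stdSimplex ℝ ι, ∑ i, ∑ j, A i j * x i * x j ≤ univ.sup' hne x)
    (s : Finset ι) : ∑ i ∈ s, ∑ j ∈ s, A i j ≤ #s := by
  classical
  obtain rfl | hs := s.eq_empty_or_nonempty
  · simp
  have hc : (0 : ℝ) < (#s : ℝ)⁻¹ := by positivity
  have hsup : univ.sup' hne (fun i => if i ∈ s then (#s : ℝ)⁻¹ else 0) ≤ (#s : ℝ)⁻¹ :=
    sup'_le _ _ fun i _ => by split_ifs <;> simp [hc.le]
  have := (h _ (ite_mem_inv_card_mem_stdSimplex hs)).trans hsup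
  rwa [sum_sum_mul_ite_mem, sq, mul_assoc, mul_le_iff_le_one_right hc,
    inv_mul_le_iff₀ (by positivity), mul_one] at this

theorem card_le_sum_sum_of_inf'_le (hne : (univ : Finset ι).Nonempty)
    (h : ∀ x ∈ stdSimplex ℝ ι, univ.inf' hne x ≤ ∑ i, ∑ j, A i j * x i * x j) :
    (Fintype.card ι : ℝ) ≤ ∑ i, ∑ j, A i j := by
  classical
  have hn : (0 : ℝ) < Fintype.card ι := by simpa [card_univ] using hne.card_pos
  have hc : (0 : ℝ) < (Fintype.card ι : ℝ)⁻¹ := inv_pos.2 hn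
  have := h _ (ite_mem_inv_card_mem_stdSimplex hne)
  rw [sum_sum_mul_ite_mem] at this
  simp only [mem_univ, if_true, inf'_const, card_univ] at this
  rwa [sq, mul_assoc, le_mul_iff_one_le_right hc, le_inv_mul_iff₀ hn, mul_one] at this

end

theorem quadratic_form_between_min_max_iff_general (m : ℕ) (hm : 0 < m)
    (A : Matrix (Fin m) (Fin m) ℝ) (hpos : ∀ i j, 0 ≤ A i j) :
    (∀ x ∈ stdSimplex ℝ (Fin m),
        Finset.univ.inf' (Finset.univ_nonempty_iff.mpr ⟨⟨0, hm⟩⟩) x ≤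
            ∑ i, ∑ j, A i j * x i * x j ∧
          ∑ i, ∑ j, A i j * x i * x j ≤
            Finset.univ.sup' (Finset.univ_nonempty_iff.mpr ⟨⟨0, hm⟩⟩) x) ↔
      ((∀ α : Finset (Fin m), ∑ i ∈ α, ∑ j ∈ α, A i j ≤ (α.card : ℝ)) ∧
        ∑ i, ∑ j, A i j = (m : ℝ)) := by
  have hne : (univ : Finset (Fin m)).Nonempty := univ_nonempty_iff.mpr ⟨⟨0, hm⟩⟩
  constructor
  · intro h
    have hblock := sum_sum_le_card_of_le_sup' hne fun x hx => (h x hx).2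
    refine ⟨hblock, le_antisymm (by simpa using hblock univ) ?_⟩
    simpa using card_le_sum_sum_of_inf'_le hne fun x hx => (h x hx).1
  · rintro ⟨hblock, htot⟩ x ⟨hx₀, hx₁⟩
    have hmin : 0 ≤ univ.inf' hne x := le_inf' _ _ fun i _ => hx₀ i
    have hmax : 0 ≤ univ.sup' hne x := (hx₀ _).trans (le_sup' x (mem_univ ⟨0, hm⟩))
    constructor
    · simpa [hx₁] using sum_mul_le_sum_sum_mul hpos hblock (by simpa using htot) hmin
        fun i => inf'_le x (mem_univ i)
    · simpa [hx₁] using sum_sum_mul_le_sum_mul hpos hblock hx₀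
        (fun i => le_sup' x (mem_univ i)) hmax

/-- For a symmetric nonnegative matrix `A`, the quadratic form satisfies
`min x ≤ (Ax, x) ≤ max x` on the simplex iff all principal-block sums of `A` are at most
the block size, with equality for the full block. -/
theorem quadratic_form_between_min_max_iff (m : ℕ) (hm : 0 < m)
    (A : Matrix (Fin m) (Fin m) ℝ) (hsym : A.IsSymm) (hpos : ∀ i j, 0 ≤ A i j) :
    (∀ x ∈ stdSimplex ℝ (Fin m),
        Finset.univ.inf' (Finset.univ_nonempty_iff.mpr ⟨⟨0, hm⟩⟩) x ≤
            ∑ i, ∑ j, A i j * x i * x j ∧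
          ∑ i, ∑ j, A i j * x i * x j ≤
            Finset.univ.sup' (Finset.univ_nonempty_iff.mpr ⟨⟨0, hm⟩⟩) x) ↔
      ((∀ α : Finset (Fin m), ∑ i ∈ α, ∑ j ∈ α, A i j ≤ (α.card : ℝ)) ∧
        ∑ i, ∑ j, A i j = (m : ℝ)) :=
  quadratic_form_between_min_max_iff_general m hm A hpos
end
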